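/- arXiv:1509.02803 — 4 statements merged into one kernel-verified Lean document; each statement's English description precedes it below -/
import Mathlib

section
/- There is an absolute constant c > 0 with the following property. Let a < b, let A and B be bounded self-adjoint operators on a complex Hilbert space whose spectra are contained in [a, b] with A ≠ B, and let f : [a, b] → ℝ be continuous with modulus of continuity ω_f(δ) := sup{|f(x) − f(y)| : x, y ∈ [a, b], |x − y| ≤ δ}. Then ‖f(A) − f(B)‖ ≤ c·log(e·(b − a)/‖A − B‖)·ω_f(‖A − B‖). (Since the spectra of A and B lie in [a, b], one has ‖A − B‖ ≤ b − a, so the logarithmic factor is at least 1.) -/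
/-!
Take a grid on `[a, b]` with `2 ^ M` steps of length `h`, where `h ≤ ‖A - B‖ ≤ 2 h`, so that
`M + 1 ≤ 2 log (e (b - a) / ‖A - B‖)`, and let `φ i` be the hat functions of the grid, a partition
of unity on `[a, b]`. Then `X := f(A) - f(B) = ∑ i j, φ i (A) X φ j (B)`. Sort the pairs `(i, j)` by
the first dyadic scale `2 ^ k` at which the blocks of `2 ^ k` consecutive indices containing `i` and
`j` are near; it suffices to show that each of the `M + 1` scales contributes `O(ω_f(‖A - B‖))`.

At scale `2 ^ k` the sum regroups as `∑ I, ψ I (A) X Ξ I (B)`, with `ψ I` the bump of block `I` and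
`Ξ I` the bump of the blocks paired with it. Blocks of equal parity have disjoint supports and each
index is paired with boundedly many blocks, so an almost orthogonality estimate reduces the sum to a
single term. Writing `X = (f - f μ)(A) - (f - f μ)(B)` for a point `μ` of block `I`, the factor
`f - f μ` is `O(2 ^ k ω_f(‖A - B‖))` on the relevant supports, while these supports are `≈ 2 ^ k h`
apart; a telescoping resolvent expansion bounds `‖u(A) v(B)‖` by `‖u‖ ‖v‖ ‖A - B‖` divided by the
distance of the supports of `u` and `v`, which cancels the factor `2 ^ k`.
-/

open Finset Filter Topology

noncomputable section

namespace OperatorModulus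

/-! ### Partition of unity by hat functions -/

def hat (t : ℝ) : ℝ := max (1 - |t|) 0

theorem hat_nonneg (t : ℝ) : 0 ≤ hat t := le_max_right _ _

theorem hat_le_one (t : ℝ) : hat t ≤ 1 := max_le (by linarith [abs_nonneg t]) zero_le_one

theorem continuous_hat : Continuous hat := by unfold hat; fun_prop

theorem hat_eq_zero {t : ℝ} (h : 1 ≤ |t|) : hat t = 0 := max_eq_right (by linarith)

theorem abs_lt_one_of_hat_ne_zero {t : ℝ} (h : hat t ≠ 0) : |t| < 1 :=
  not_le.1 fun h' => h (hat_eq_zero h')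

theorem hat_add_hat_sub_one {t : ℝ} (h₀ : 0 ≤ t) (h₁ : t ≤ 1) : hat t + hat (t - 1) = 1 := by
  simp only [hat, abs_of_nonneg h₀, abs_of_nonpos (by linarith : t - 1 ≤ 0)]
  rw [max_eq_left (by linarith), max_eq_left (by linarith)]; ring

theorem hat_add_hat_sub_one_le (t : ℝ) : hat t + hat (t - 1) ≤ 1 := by
  rcases le_or_gt t 0 with h | h
  · rw [hat_eq_zero (t := t - 1) (by rw [abs_of_nonpos (by linarith)]; linarith), add_zero]
    exact hat_le_one t
  rcases le_or_gt t 1 with h' | h'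
  · exact (hat_add_hat_sub_one h.le h').le
  · rw [hat_eq_zero (t := t) (by rw [abs_of_pos h]; linarith), zero_add]
    exact hat_le_one _

theorem sum_range_succ_succ_hat_sub_of_le {n : ℕ} {s : ℝ} (hs : s ≤ n) :
    ∑ i ∈ range (n + 2), hat (s - i) = ∑ i ∈ range (n + 1), hat (s - i) := by
  rw [sum_range_succ, hat_eq_zero, add_zero]
  push_cast
  rw [abs_of_nonpos (by linarith)]; linarith

theorem sum_range_succ_hat_sub_eq_hat_of_le {n : ℕ} {s : ℝ} (hs : n ≤ s) :
    ∑ i ∈ range (n + 1), hat (s - i) = hat (s - n) := by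
  rw [sum_range_succ, sum_eq_zero fun i hi => hat_eq_zero ?_, zero_add]
  have : (i : ℝ) + 1 ≤ n := by exact_mod_cast mem_range.1 hi
  rw [abs_of_nonneg (by linarith)]; linarith

theorem sum_range_hat_sub_le_one (n : ℕ) (s : ℝ) : ∑ i ∈ range (n + 1), hat (s - i) ≤ 1 := by
  induction n with
  | zero => simpa using hat_le_one s
  | succ n ih =>
    rcases le_or_gt s n with h | h
    · rw [sum_range_succ_succ_hat_sub_of_le h]; exact ih
    · rw [sum_range_succ, sum_range_succ_hat_sub_eq_hat_of_le h.le]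
      push_cast
      simpa [sub_sub] using hat_add_hat_sub_one_le (s - n)

theorem sum_range_hat_sub_eq_one {n : ℕ} {s : ℝ} (h₀ : 0 ≤ s) (hn : s ≤ n) :
    ∑ i ∈ range (n + 1), hat (s - i) = 1 := by
  induction n with
  | zero => simp [le_antisymm (by exact_mod_cast hn) h₀, hat]
  | succ n ih =>
    rcases le_or_gt s n with h | h
    · rw [sum_range_succ_succ_hat_sub_of_le h]; exact ih h
    · rw [sum_range_succ, sum_range_succ_hat_sub_eq_hat_of_le h.le]
      push_cast at hn ⊢
      simpa [sub_sub] using hat_add_hat_sub_one (sub_nonneg.2 h.le) (by linarith)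

theorem sum_hat_sub_le_one (S : Finset ℕ) (s : ℝ) : ∑ i ∈ S, hat (s - i) ≤ 1 :=
  (sum_le_sum_of_subset_of_nonneg
    (fun _ hi => mem_range.2 (Nat.lt_succ_of_le (le_sup (f := id) hi))) fun _ _ _ => hat_nonneg _).trans (sum_range_hat_sub_le_one (S.sup id) s)

section Grid

variable {a h x : ℝ} {n : ℕ}

def gridBump (a h : ℝ) (i : ℕ) (x : ℝ) : ℝ := hat ((x - a) / h - i)

def gridSum (a h : ℝ) (S : Finset ℕ) (x : ℝ) : ℝ := ∑ i ∈ S, gridBump a h i x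

theorem gridSum_eq_sum (S : Finset ℕ) : gridSum a h S = ∑ i ∈ S, gridBump a h i :=
  funext fun x => (Finset.sum_apply x S _).symm

theorem continuous_gridBump (i : ℕ) : Continuous (gridBump a h i) :=
  continuous_hat.comp (by fun_prop)

theorem continuous_gridSum (S : Finset ℕ) : Continuous (gridSum a h S) :=
  continuous_finsetSum _ fun i _ => continuous_gridBump i

theorem gridSum_nonneg (S : Finset ℕ) (x : ℝ) : 0 ≤ gridSum a h S x :=
  sum_nonneg fun _ _ => hat_nonneg _

theorem gridSum_le_one (S : Finset ℕ) (x : ℝ) : gridSum a h S x ≤ 1 :=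
  sum_hat_sub_le_one S _

theorem le_add_one_of_gridBump_ne_zero {i j : ℕ} (hi : gridBump a h i x ≠ 0)
    (hj : gridBump a h j x ≠ 0) : i ≤ j + 1 := by
  have h₁ := abs_lt.1 (abs_lt_one_of_hat_ne_zero hi)
  have h₂ := abs_lt.1 (abs_lt_one_of_hat_ne_zero hj)
  have : (i : ℝ) < j + 1 + 1 := by linarith
  exact Nat.lt_succ_iff.1 (by exact_mod_cast this)

theorem gridSum_range_eq_one (hh : 0 < h) (hx : x ∈ Set.Icc a (a + n * h)) :
    gridSum a h (range (n + 1)) x = 1 := by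
  refine sum_range_hat_sub_eq_one (div_nonneg (by linarith [hx.1]) hh.le) ?_
  rw [div_le_iff₀ hh]; linarith [hx.2]

theorem gridSum_eq_one_of_subset (hh : 0 < h) (hx : x ∈ Set.Icc a (a + n * h)) {S : Finset ℕ}
    (hS : S ⊆ range (n + 1)) (hcover : ∀ i ∈ range (n + 1), gridBump a h i x ≠ 0 → i ∈ S) :
    gridSum a h S x = 1 := by
  rw [← gridSum_range_eq_one hh hx]
  exact sum_subset hS fun i hi hiS => not_not.1 (mt (hcover i hi) hiS)

theorem abs_gridSum_le_one (S : Finset ℕ) (x : ℝ) : |gridSum a h S x| ≤ 1 := by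
  rw [abs_of_nonneg (gridSum_nonneg S x)]; exact gridSum_le_one S x

theorem abs_sub_eq_mul_abs_div (hh : 0 < h) (x c : ℝ) :
    |x - (a + c * h)| = h * |(x - a) / h - c| := by
  rw [show (x - a) / h - c = (x - (a + c * h)) / h by field_simp; ring, abs_div, abs_of_pos hh]
  field_simp

end Grid

/-! ### Blocks of grid points -/

section Blocks

variable {a h x : ℝ} {n m : ℕ}

def block (n m I : ℕ) : Finset ℕ := {i ∈ range (n + 1) | i / m = I}

def partners (n m : ℕ) (r : ℕ → ℕ → Prop) [DecidableRel r] (I : ℕ) : Finset ℕ :=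
  {j ∈ range (n + 1) | r I (j / m)}

def thicken (n : ℕ) (S : Finset ℕ) : Finset ℕ :=
  {j ∈ range (n + 1) | ∃ i ∈ S, j ≤ i + 1 ∧ i ≤ j + 1}

theorem natCast_div_mul_le_and_add_one_le (i : ℕ) (hm : 0 < m) :
    ((i / m : ℕ) : ℝ) * m ≤ i ∧ (i : ℝ) + 1 ≤ (i / m : ℕ) * m + m := by
  constructor
  · exact_mod_cast Nat.div_mul_le_self i m
  · exact_mod_cast Nat.lt_div_mul_add (a := i) hm

theorem div_le_div_add_one {i j : ℕ} (hm : 0 < m) (h : i ≤ j + 1) : i / m ≤ j / m + 1 :=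
  calc i / m ≤ (j + m) / m := Nat.div_le_div_right (by omega)
    _ = j / m + 1 := Nat.add_div_right j hm

theorem abs_sub_le_of_gridSum_block_ne_zero (hm : 0 < m) {I : ℕ}
    (hx : gridSum a h (block n m I) x ≠ 0) : |(x - a) / h - I * m| ≤ m := by
  obtain ⟨i, hi, hne⟩ := exists_ne_zero_of_sum_ne_zero hx
  obtain ⟨-, rfl⟩ := mem_filter.1 hi
  have := abs_lt.1 (abs_lt_one_of_hat_ne_zero hne)
  have := natCast_div_mul_le_and_add_one_le i hm
  exact abs_le.2 ⟨by linarith, by linarith⟩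

theorem gridSum_block_mul_eq_zero (hm : 0 < m) {I I' : ℕ} (hne : I ≠ I')
    (hpar : I % 2 = I' % 2) (x : ℝ) :
    gridSum a h (block n m I) x * gridSum a h (block n m I') x = 0 := by
  by_contra hx
  obtain ⟨i, hi, hφ⟩ := exists_ne_zero_of_sum_ne_zero (left_ne_zero_of_mul hx)
  obtain ⟨i', hi', hφ'⟩ := exists_ne_zero_of_sum_ne_zero (right_ne_zero_of_mul hx)
  obtain ⟨-, rfl⟩ := mem_filter.1 hi
  obtain ⟨-, rfl⟩ := mem_filter.1 hi'
  have := div_le_div_add_one hm (le_add_one_of_gridBump_ne_zero hφ hφ')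
  have := div_le_div_add_one hm (le_add_one_of_gridBump_ne_zero hφ' hφ)
  omega

theorem exists_partner_of_gridSum_thicken_ne_zero {r : ℕ → ℕ → Prop} [DecidableRel r] {I : ℕ}
    (hx : gridSum a h (thicken n (partners n m r I)) x ≠ 0) :
    ∃ j, r I (j / m) ∧ |(x - a) / h - j| < 2 := by
  obtain ⟨j', hj', hne⟩ := exists_ne_zero_of_sum_ne_zero hx
  obtain ⟨-, j, hj, h₁, h₂⟩ := mem_filter.1 hj'
  refine ⟨j, (mem_filter.1 hj).2, ?_⟩
  have := abs_lt.1 (abs_lt_one_of_hat_ne_zero hne)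
  have : (j' : ℝ) ≤ j + 1 := by exact_mod_cast h₁
  have : (j : ℝ) ≤ j' + 1 := by exact_mod_cast h₂
  exact abs_lt.2 ⟨by linarith, by linarith⟩

theorem abs_sub_le_of_gridSum_thicken_ne_zero (hm : 0 < m) {r : ℕ → ℕ → Prop} [DecidableRel r]
    (hr : ∀ I J, r I J → I ≤ J + 7 ∧ J ≤ I + 7) {I : ℕ}
    (hx : gridSum a h (thicken n (partners n m r I)) x ≠ 0) :
    |(x - a) / h - I * m| ≤ 9 * m := by
  obtain ⟨j, hj, hx⟩ := exists_partner_of_gridSum_thicken_ne_zero hx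
  have h₁ : (I : ℝ) ≤ (j / m : ℕ) + 7 := by exact_mod_cast (hr _ _ hj).1
  have h₂ : ((j / m : ℕ) : ℝ) ≤ I + 7 := by exact_mod_cast (hr _ _ hj).2
  have := natCast_div_mul_le_and_add_one_le j hm
  have := abs_lt.1 hx
  have hm' : (1 : ℝ) ≤ m := by exact_mod_cast hm
  exact abs_le.2 ⟨by nlinarith, by nlinarith⟩

theorem le_abs_sub_of_gridSum_thicken_ne_zero (hm : 0 < m) {r : ℕ → ℕ → Prop} [DecidableRel r]
    (hr : ∀ I J, r I J → I + 4 ≤ J ∨ J + 4 ≤ I) {I : ℕ}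
    (hx : gridSum a h (thicken n (partners n m r I)) x ≠ 0) :
    2 * m ≤ |(x - a) / h - I * m| := by
  obtain ⟨j, hj, hx⟩ := exists_partner_of_gridSum_thicken_ne_zero hx
  have := natCast_div_mul_le_and_add_one_le j hm
  have := abs_lt.1 hx
  have hm' : (1 : ℝ) ≤ m := by exact_mod_cast hm
  rcases hr _ _ hj with h | h
  · have h' : (I : ℝ) + 4 ≤ (j / m : ℕ) := by exact_mod_cast h
    exact le_abs.2 (Or.inl (by nlinarith))
  · have h' : ((j / m : ℕ) : ℝ) + 4 ≤ I := by exact_mod_cast h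
    exact le_abs.2 (Or.inr (by nlinarith))

theorem gridSum_thicken_eq_one (hh : 0 < h) (hx : x ∈ Set.Icc a (a + n * h)) {S : Finset ℕ}
    (hS : gridSum a h S x ≠ 0) : gridSum a h (thicken n S) x = 1 := by
  obtain ⟨i, hi, hne⟩ := exists_ne_zero_of_sum_ne_zero hS
  refine gridSum_eq_one_of_subset hh hx (filter_subset _ _) fun j hj hj' => mem_filter.2 ⟨hj, i, hi,
    le_add_one_of_gridBump_ne_zero hj' hne, le_add_one_of_gridBump_ne_zero hne hj'⟩

theorem sum_sq_gridSum_partners_le {r : ℕ → ℕ → Prop} [DecidableRel r]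
    (hr : ∀ I J, r I J → I ≤ J + 7 ∧ J ≤ I + 7) (s : Finset ℕ) (x : ℝ) :
    ∑ I ∈ s, gridSum a h (partners n m r I) x ^ 2 ≤ 4 ^ 2 := by
  have hcard : ∀ J, #{I ∈ s | r I J} ≤ 15 := fun J => by
    calc #{I ∈ s | r I J} ≤ #(Icc (J - 7) (J + 7)) :=
          card_le_card fun I hI => mem_Icc.2 (by have := hr I J (mem_filter.1 hI).2; omega)
      _ ≤ 15 := by simp; omega
  calc ∑ I ∈ s, gridSum a h (partners n m r I) x ^ 2
      ≤ ∑ I ∈ s, gridSum a h (partners n m r I) x :=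
        sum_le_sum fun I _ => pow_le_of_le_one (gridSum_nonneg _ _) (gridSum_le_one _ _) two_ne_zero
    _ = ∑ j ∈ range (n + 1), #{I ∈ s | r I (j / m)} * gridBump a h j x := by
        simp only [gridSum, partners, sum_filter]
        rw [sum_comm]
        refine sum_congr rfl fun j _ => ?_
        rw [← sum_filter, sum_const, nsmul_eq_mul]
    _ ≤ ∑ j ∈ range (n + 1), 15 * gridBump a h j x :=
        sum_le_sum fun j _ => mul_le_mul_of_nonneg_right (by exact_mod_cast hcard _) (hat_nonneg _)
    _ ≤ 4 ^ 2 := by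
        have : ∑ j ∈ range (n + 1), gridBump a h j x ≤ 1 := gridSum_le_one _ x
        rw [← mul_sum]; linarith

end Blocks

/-! ### Modulus of continuity -/

def modulusOfContinuity (f : ℝ → ℝ) (s : Set ℝ) (δ : ℝ) : ℝ :=
  sSup {d : ℝ | ∃ x ∈ s, ∃ y ∈ s, |x - y| ≤ δ ∧ d = |f x - f y|}

def LipschitzAtScale (F : ℝ → ℝ) (h ω : ℝ) : Prop :=
  ∀ (K : ℕ) (x y : ℝ), |x - y| ≤ K * h → |F x - F y| ≤ K * ω

theorem LipschitzAtScale.nonneg {F : ℝ → ℝ} {h ω : ℝ} (hF : LipschitzAtScale F h ω) (hh : 0 ≤ h) :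
    0 ≤ ω := by
  simpa using hF 1 0 0 (by simpa using hh)

section Modulus

variable {f : ℝ → ℝ} {s : Set ℝ} {δ : ℝ}

theorem abs_sub_le_modulusOfContinuity (hs : IsCompact s) (hf : ContinuousOn f s) {x y : ℝ}
    (hx : x ∈ s) (hy : y ∈ s) (hxy : |x - y| ≤ δ) : |f x - f y| ≤ modulusOfContinuity f s δ := by
  obtain ⟨C, hC⟩ := hs.exists_bound_of_continuousOn hf
  refine le_csSup ⟨C + C, ?_⟩ ⟨x, hx, y, hy, hxy, rfl⟩
  rintro _ ⟨x, hx, y, hy, -, rfl⟩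
  exact (abs_sub _ _).trans (add_le_add (hC x hx) (hC y hy))

theorem abs_sub_le_mul_modulusOfContinuity (hs : IsCompact s) (hs' : s.OrdConnected)
    (hf : ContinuousOn f s) (hδ : 0 ≤ δ) (K : ℕ) {x y : ℝ} (hx : x ∈ s) (hy : y ∈ s)
    (hxy : |x - y| ≤ K * δ) : |f x - f y| ≤ K * modulusOfContinuity f s δ := by
  wlog hle : x ≤ y generalizing x y
  · rw [abs_sub_comm] at hxy ⊢; exact this hy hx hxy (le_of_not_ge hle)
  rw [abs_of_nonpos (by linarith)] at hxy
  induction K generalizing x with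
  | zero => simp [le_antisymm hle (by simpa using hxy)]
  | succ K ih =>
    set z := min y (x + δ)
    have hxz : x ≤ z := le_min hle (by linarith)
    have hz : z ∈ s := hs'.out hx hy ⟨hxz, min_le_left _ _⟩
    have h₁ : |x - z| ≤ δ := by rw [abs_of_nonpos (by linarith)]; linarith [min_le_right y (x + δ)]
    have h₂ : -(z - y) ≤ K * δ := by
      push_cast at hxy
      rcases min_cases y (x + δ) with ⟨h, -⟩ | ⟨h, -⟩ <;> simp only [z, h] <;> nlinarith
    calc |f x - f y| ≤ |f x - f z| + |f z - f y| := abs_sub_le _ _ _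
      _ ≤ modulusOfContinuity f s δ + K * modulusOfContinuity f s δ :=
          add_le_add (abs_sub_le_modulusOfContinuity hs hf hx hz h₁) (ih hz h₂ (min_le_left _ _))
      _ = (K + 1 : ℕ) * modulusOfContinuity f s δ := by push_cast; ring

theorem lipschitzAtScale_comp_projIcc {a b h : ℝ} (hab : a ≤ b) (hf : ContinuousOn f (Set.Icc a b))
    (hh : 0 ≤ h) (hhδ : h ≤ δ) :
    LipschitzAtScale (fun x => f (Set.projIcc a b hab x)) h
      (modulusOfContinuity f (Set.Icc a b) δ) :=
  fun K x y hxy => abs_sub_le_mul_modulusOfContinuity isCompact_Icc Set.ordConnected_Icc hf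
    (hh.trans hhδ) K (Set.projIcc a b hab x).2 (Set.projIcc a b hab y).2
    ((Set.abs_projIcc_sub_projIcc hab).trans (hxy.trans (by gcongr)))

end Modulus

/-! ### Estimates in C⋆-algebras -/

theorem mul_eq_add_sum_of_recursion {R : Type*} [Ring R] (X Y : ℕ → R) (D : R)
    (hstep : ∀ n, X n * Y n = X (n + 1) * Y (n + 1) + X n * D * Y (n + 1)) (N : ℕ) :
    X 0 * Y 0 = X N * Y N + ∑ n ∈ range N, X n * D * Y (n + 1) := by
  induction N with
  | zero => simp
  | succ N ih => rw [ih, hstep N, sum_range_succ]; abel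

theorem norm_mul_le_of_recursion {R : Type*} [NormedRing R] (X Y : ℕ → R) (D : R)
    (hstep : ∀ n, X n * Y n = X (n + 1) * Y (n + 1) + X n * D * Y (n + 1))
    {α β r s : ℝ} (hr : 0 ≤ r) (hs : 0 ≤ s) (hrs : r * s < 1)
    (hX : ∀ n, ‖X n‖ ≤ α * r ^ n) (hY : ∀ n, ‖Y n‖ ≤ β * s ^ n) :
    ‖X 0 * Y 0‖ ≤ α * β * s * ‖D‖ / (1 - r * s) := by
  have hα : 0 ≤ α := by simpa using (norm_nonneg _).trans (hX 0)
  have hβ : 0 ≤ β := by simpa using (norm_nonneg _).trans (hY 0)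
  have hrs₀ : 0 ≤ r * s := mul_nonneg hr hs
  have hbound : ∀ N : ℕ,
      ‖X 0 * Y 0‖ ≤ α * β * (r * s) ^ N + α * β * s * ‖D‖ / (1 - r * s) := fun N => by
    rw [mul_eq_add_sum_of_recursion X Y D hstep N]
    refine (norm_add_le _ _).trans (add_le_add ?_ ((norm_sum_le _ _).trans ?_))
    · calc ‖X N * Y N‖ ≤ ‖X N‖ * ‖Y N‖ := norm_mul_le _ _
        _ ≤ α * r ^ N * (β * s ^ N) := by gcongr <;> apply_assumption
        _ = α * β * (r * s) ^ N := by ring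
    · calc ∑ n ∈ range N, ‖X n * D * Y (n + 1)‖
          ≤ ∑ n ∈ range N, α * r ^ n * ‖D‖ * (β * s ^ (n + 1)) := by
            refine sum_le_sum fun n _ => norm_mul₃_le.trans ?_
            gcongr <;> apply_assumption
        _ = α * β * s * ‖D‖ * ∑ n ∈ range N, (r * s) ^ n := by
            rw [mul_sum]; exact sum_congr rfl fun n _ => by ring
        _ ≤ α * β * s * ‖D‖ * (1 / (1 - r * s)) := by
            gcongr
            simpa [← range_eq_Ico] using geom_sum_Ico_le_of_lt_one (m := 0) (n := N) hrs₀ hrs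
        _ = α * β * s * ‖D‖ / (1 - r * s) := by ring
  have hlim : Tendsto (fun N : ℕ => α * β * (r * s) ^ N + α * β * s * ‖D‖ / (1 - r * s))
      atTop (𝓝 (α * β * 0 + α * β * s * ‖D‖ / (1 - r * s))) :=
    ((tendsto_pow_atTop_nhds_zero_of_lt_one hrs₀ hrs).const_mul _).add_const _
  simpa using ge_of_tendsto' hlim hbound

theorem abs_pow_mul_le {g u : ℝ → ℝ} {ρ C : ℝ} (hρ : 0 ≤ ρ) (hg : ∀ x, u x ≠ 0 → |g x| ≤ ρ)
    (hu : ∀ x, |u x| ≤ C) (n : ℕ) (x : ℝ) : |g x ^ n * u x| ≤ C * ρ ^ n := by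
  rw [abs_mul, abs_pow, mul_comm]
  by_cases hx : u x = 0
  · simpa [hx] using mul_nonneg ((abs_nonneg _).trans (hu x)) (pow_nonneg hρ n)
  · exact mul_le_mul (hu x) (pow_le_pow_left₀ (abs_nonneg _) (hg x hx) n) (by positivity)
      ((abs_nonneg _).trans (hu x))

def regInv (μ S x : ℝ) : ℝ := (x - μ) / max ((x - μ) ^ 2) (S ^ 2)

theorem continuous_regInv {μ S : ℝ} (hS : 0 < S) : Continuous (regInv μ S) :=
  (continuous_id.sub continuous_const).div (by fun_prop)
    fun _ => (lt_max_of_lt_right (by positivity)).ne'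

theorem abs_regInv_le {μ S : ℝ} (hS : 0 < S) (x : ℝ) : |regInv μ S x| ≤ S⁻¹ := by
  have hpos : 0 < max ((x - μ) ^ 2) (S ^ 2) := lt_max_of_lt_right (by positivity)
  rw [regInv, abs_div, abs_of_pos hpos, div_le_iff₀ hpos, inv_mul_eq_div, le_div_iff₀ hS]
  rcases le_total |x - μ| S with h | h
  · nlinarith [le_max_right ((x - μ) ^ 2) (S ^ 2), abs_nonneg (x - μ)]
  · nlinarith [le_max_left ((x - μ) ^ 2) (S ^ 2), sq_abs (x - μ)]

theorem sub_mul_regInv {μ S x : ℝ} (hS : 0 < S) (hx : S ≤ |x - μ|) :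
    (x - μ) * regInv μ S x = 1 := by
  have hsq : S ^ 2 ≤ (x - μ) ^ 2 := by nlinarith [sq_abs (x - μ)]
  have hne : x - μ ≠ 0 := fun h0 => by rw [h0, abs_zero] at hx; linarith
  rw [regInv, max_eq_left hsq]
  field_simp

section CStarAlgebra

variable {𝒜 : Type*} [CStarAlgebra 𝒜] {A B : 𝒜}

theorem norm_sum_mul_mul_sq_le [PartialOrder 𝒜] [StarOrderedRing 𝒜] {ι : Type*} (s : Finset ι)
    (P Z Q : ι → 𝒜) (horth : ∀ i ∈ s, ∀ j ∈ s, i ≠ j → star (P i) * P j = 0) {c : ℝ}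
    (hPZ : ∀ i ∈ s, ‖P i * Z i‖ ≤ c) :
    ‖∑ i ∈ s, P i * Z i * Q i‖ ^ 2 ≤ c ^ 2 * ‖∑ i ∈ s, star (Q i) * Q i‖ := by
  set T := ∑ i ∈ s, P i * Z i * Q i
  have hdiag : star T * T = ∑ i ∈ s, star (Q i) * (star (P i * Z i) * (P i * Z i)) * Q i := by
    simp only [T, star_sum, sum_mul, mul_sum]
    refine sum_congr rfl fun i hi => ?_
    rw [sum_eq_single_of_mem i hi fun j hj hji => ?_]
    · simp only [star_mul, mul_assoc]
    · simp only [star_mul, mul_assoc]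
      rw [← mul_assoc (star (P j)), horth j hj i hi hji, zero_mul, mul_zero, mul_zero]
  have hle : star T * T ≤ c ^ 2 • ∑ i ∈ s, star (Q i) * Q i := by
    rw [hdiag, smul_sum]
    refine sum_le_sum fun i hi => ?_
    calc star (Q i) * (star (P i * Z i) * (P i * Z i)) * Q i
        ≤ ‖star (P i * Z i) * (P i * Z i)‖ • (star (Q i) * Q i) :=
          CStarAlgebra.star_left_conjugate_le_norm_smul (IsSelfAdjoint.star_mul_self _)
      _ ≤ c ^ 2 • (star (Q i) * Q i) := by
          refine smul_le_smul_of_nonneg_right ?_ (star_mul_self_nonneg _)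
          rw [CStarRing.norm_star_mul_self, ← sq]
          exact pow_le_pow_left₀ (norm_nonneg _) (hPZ i hi) 2
  calc ‖T‖ ^ 2 = ‖star T * T‖ := by rw [CStarRing.norm_star_mul_self, sq]
    _ ≤ ‖c ^ 2 • ∑ i ∈ s, star (Q i) * Q i‖ :=
        CStarAlgebra.norm_le_norm_of_nonneg_of_le (star_mul_self_nonneg T) hle
    _ = c ^ 2 * ‖∑ i ∈ s, star (Q i) * Q i‖ := by
        rw [norm_smul, Real.norm_of_nonneg (sq_nonneg c)]

theorem cfc_id_sub_const (hA : IsSelfAdjoint A) (μ : ℝ) :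
    cfc (fun x : ℝ => x - μ) A = A - algebraMap ℝ 𝒜 μ := by
  rw [cfc_sub _ _ A, cfc_id' ℝ A, cfc_const μ A]

theorem norm_sub_le_of_spectrum_subset_Icc (hA : IsSelfAdjoint A) (hB : IsSelfAdjoint B) {a b : ℝ}
    (hab : a ≤ b) (hAab : spectrum ℝ A ⊆ Set.Icc a b) (hBab : spectrum ℝ B ⊆ Set.Icc a b) :
    ‖A - B‖ ≤ b - a := by
  have hmid : ∀ T : 𝒜, IsSelfAdjoint T → spectrum ℝ T ⊆ Set.Icc a b →
      ‖T - algebraMap ℝ 𝒜 ((a + b) / 2)‖ ≤ (b - a) / 2 := fun T hT hTab => by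
    rw [← cfc_id_sub_const hT]
    refine norm_cfc_le (by linarith) fun x hx => ?_
    rw [Real.norm_eq_abs, abs_le]
    constructor <;> linarith [(hTab hx).1, (hTab hx).2]
  calc ‖A - B‖ = ‖(A - algebraMap ℝ 𝒜 ((a + b) / 2)) - (B - algebraMap ℝ 𝒜 ((a + b) / 2))‖ := by
        rw [sub_sub_sub_cancel_right]
    _ ≤ (b - a) / 2 + (b - a) / 2 :=
        (norm_sub_le _ _).trans (add_le_add (hmid A hA hAab) (hmid B hB hBab))
    _ = b - a := by ring

theorem norm_cfc_mul_cfc_le_of_separated (hA : IsSelfAdjoint A) (hB : IsSelfAdjoint B)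
    {u v : ℝ → ℝ} (hu : Continuous u) (hv : Continuous v) {μ R S Cu Cv : ℝ}
    (hR : 0 ≤ R) (hRS : R < S)
    (hu_supp : ∀ x, u x ≠ 0 → |x - μ| ≤ R) (hv_supp : ∀ x, v x ≠ 0 → S ≤ |x - μ|)
    (hu_le : ∀ x, |u x| ≤ Cu) (hv_le : ∀ x, |v x| ≤ Cv) :
    ‖cfc u A * cfc v B‖ ≤ Cu * Cv * ‖A - B‖ / (S - R) := by
  have hS : 0 < S := hR.trans_lt hRS
  have hg := continuous_regInv (μ := μ) hS
  -- Moving one factor `x - μ` at a time from `v(B)` (through `B - μ`) to `u(A)` (as `A - μ`)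
  -- gains `R / S` per step and costs one `B - A`.
  set X : ℕ → 𝒜 := fun n => cfc (fun x => (x - μ) ^ n * u x) A
  set Y : ℕ → 𝒜 := fun n => cfc (fun x => regInv μ S x ^ n * v x) B
  have hX : ∀ n, X n * (A - algebraMap ℝ 𝒜 μ) = X (n + 1) := fun n => by
    rw [← cfc_id_sub_const hA, ← cfc_mul _ _ A]
    exact cfc_congr fun x _ => by ring
  have hY : ∀ n, (B - algebraMap ℝ 𝒜 μ) * Y (n + 1) = Y n := fun n => by
    rw [← cfc_id_sub_const hB, ← cfc_mul _ _ B]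
    refine cfc_congr fun x _ => ?_
    by_cases hx : v x = 0
    · simp [hx]
    · linear_combination (regInv μ S x ^ n * v x) * sub_mul_regInv hS (hv_supp x hx)
  have key := norm_mul_le_of_recursion X Y (B - A) (fun n => by rw [← hY, ← hX]; noncomm_ring)
    hR (inv_nonneg.2 hS.le) (by rwa [← div_eq_mul_inv, div_lt_one hS])
    (fun n => norm_cfc_le (mul_nonneg ((abs_nonneg _).trans (hu_le 0)) (pow_nonneg hR n))
      fun x _ => abs_pow_mul_le hR hu_supp hu_le n x)
    (fun n => norm_cfc_le
      (mul_nonneg ((abs_nonneg _).trans (hv_le 0)) (pow_nonneg (inv_nonneg.2 hS.le) n))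
      fun x _ => abs_pow_mul_le (inv_nonneg.2 hS.le) (fun x _ => abs_regInv_le hS x) hv_le n x)
  simp only [X, Y, pow_zero, one_mul] at key
  convert key using 1
  rw [norm_sub_rev]
  field_simp

theorem cfc_mul_sub_mul_cfc {F u w : ℝ → ℝ} (hF : Continuous F) (hu : Continuous u)
    (hw : Continuous w) (c₀ : ℝ) :
    cfc u A * (cfc F A - cfc F B) * cfc w B
      = cfc (fun x => (F x - c₀) * u x) A * cfc w B
        - cfc u A * cfc (fun x => (F x - c₀) * w x) B := by
  have hA : cfc (fun x => (F x - c₀) * u x) A = cfc u A * cfc F A - c₀ • cfc u A := by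
    rw [← cfc_mul u F A, ← cfc_const_mul c₀ u A, ← cfc_sub _ _ A]
    exact cfc_congr fun x _ => by ring
  have hB : cfc (fun x => (F x - c₀) * w x) B = cfc F B * cfc w B - c₀ • cfc w B := by
    rw [← cfc_mul F w B, ← cfc_const_mul c₀ w B, ← cfc_sub _ _ B]
    exact cfc_congr fun x _ => by ring
  rw [hA, hB]
  simp only [sub_mul, mul_sub, smul_mul_assoc, mul_smul_comm, mul_assoc]
  abel

end CStarAlgebra

/-! ### Block sums -/

section BlockSums

variable {𝒜 : Type*} [CStarAlgebra 𝒜] {A B Y : 𝒜} {a h : ℝ} {n m : ℕ}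

theorem cfc_gridSum (T : 𝒜) (S : Finset ℕ) :
    cfc (gridSum a h S) T = ∑ i ∈ S, cfc (gridBump a h i) T := by
  rw [gridSum_eq_sum, cfc_sum _ T S fun i _ => (continuous_gridBump i).continuousOn]

theorem cfc_gridSum_range {T : 𝒜} (hT : IsSelfAdjoint T) (hh : 0 < h)
    (hTspec : spectrum ℝ T ⊆ Set.Icc a (a + n * h)) : cfc (gridSum a h (range (n + 1))) T = 1 := by
  rw [← cfc_const_one ℝ T]
  exact cfc_congr fun x hx => gridSum_range_eq_one hh (hTspec hx)

theorem star_cfc (f : ℝ → ℝ) (T : 𝒜) : star (cfc f T) = cfc f T :=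
  (cfc_predicate (R := ℝ) f T).star_eq

def blockSum (A B Y : 𝒜) (a h : ℝ) (n : ℕ) (r : ℕ → ℕ → Prop) [DecidableRel r] : 𝒜 :=
  ∑ i ∈ range (n + 1), ∑ j ∈ range (n + 1),
    if r i j then cfc (gridBump a h i) A * Y * cfc (gridBump a h j) B else 0

theorem blockSum_congr {r r' : ℕ → ℕ → Prop} [DecidableRel r] [DecidableRel r']
    (hrr' : ∀ i j, r i j ↔ r' i j) : blockSum A B Y a h n r = blockSum A B Y a h n r' :=
  sum_congr rfl fun i _ => sum_congr rfl fun j _ => if_congr (hrr' i j) rfl rfl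

theorem blockSum_sub_blockSum {r r' : ℕ → ℕ → Prop} [DecidableRel r] [DecidableRel r']
    (hrr' : ∀ i j, r' i j → r i j) :
    blockSum A B Y a h n r - blockSum A B Y a h n r'
      = blockSum A B Y a h n (fun i j => r i j ∧ ¬ r' i j) := by
  simp only [blockSum, ← sum_sub_distrib]
  refine sum_congr rfl fun i _ => sum_congr rfl fun j _ => ?_
  by_cases h₂ : r' i j
  · simp [h₂, hrr' i j h₂]
  · by_cases h₁ : r i j <;> simp [h₁, h₂]

theorem blockSum_of_forall (hA : IsSelfAdjoint A) (hB : IsSelfAdjoint B) (hh : 0 < h)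
    (hAspec : spectrum ℝ A ⊆ Set.Icc a (a + n * h)) (hBspec : spectrum ℝ B ⊆ Set.Icc a (a + n * h))
    {r : ℕ → ℕ → Prop} [DecidableRel r] (hr : ∀ i ∈ range (n + 1), ∀ j ∈ range (n + 1), r i j) :
    blockSum A B Y a h n r = Y := by
  have : blockSum A B Y a h n r = cfc (gridSum a h (range (n + 1))) A * Y
      * cfc (gridSum a h (range (n + 1))) B := by
    rw [cfc_gridSum, cfc_gridSum, sum_mul, sum_mul]
    refine sum_congr rfl fun i hi => ?_
    rw [mul_sum]
    exact sum_congr rfl fun j hj => if_pos (hr i hi j hj)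
  rw [this, cfc_gridSum_range hA hh hAspec, cfc_gridSum_range hB hh hBspec, one_mul, mul_one]

theorem blockSum_eq_sum_block (r : ℕ → ℕ → Prop) [DecidableRel r] :
    blockSum A B Y a h n (fun i j => r (i / m) (j / m))
      = ∑ I ∈ range (n / m + 1),
          cfc (gridSum a h (block n m I)) A * Y * cfc (gridSum a h (partners n m r I)) B := by
  have hinner : ∀ i, (∑ j ∈ range (n + 1),
      if r (i / m) (j / m) then cfc (gridBump a h i) A * Y * cfc (gridBump a h j) B else 0)
      = cfc (gridBump a h i) A * Y * cfc (gridSum a h (partners n m r (i / m))) B := fun i => by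
    rw [← sum_filter, cfc_gridSum, mul_sum]; rfl
  simp only [blockSum, hinner]
  rw [← sum_fiberwise_of_maps_to (t := range (n / m + 1)) (g := (· / m))
    fun i hi => mem_range_succ_iff.2 (Nat.div_le_div_right (mem_range_succ_iff.1 hi))]
  refine sum_congr rfl fun I _ => ?_
  rw [cfc_gridSum, sum_mul, sum_mul]
  exact sum_congr rfl fun i hi => by rw [(mem_filter.1 hi).2]

variable [PartialOrder 𝒜] [StarOrderedRing 𝒜]

theorem norm_sum_block_mul_le (hm : 0 < m) {r : ℕ → ℕ → Prop} [DecidableRel r]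
    (hr : ∀ I J, r I J → I ≤ J + 7 ∧ J ≤ I + 7) (s : Finset ℕ)
    (hs : ∀ I ∈ s, ∀ J ∈ s, I % 2 = J % 2) (Z : ℕ → 𝒜) {c : ℝ} (hc : 0 ≤ c)
    (hZ : ∀ I ∈ s, ‖cfc (gridSum a h (block n m I)) A * Z I‖ ≤ c) :
    ‖∑ I ∈ s, cfc (gridSum a h (block n m I)) A * Z I * cfc (gridSum a h (partners n m r I)) B‖
      ≤ 4 * c := by
  have horth : ∀ I ∈ s, ∀ J ∈ s, I ≠ J → star (cfc (gridSum a h (block n m I)) A)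
      * cfc (gridSum a h (block n m J)) A = 0 := fun I hI J hJ hIJ => by
    rw [star_cfc, ← cfc_mul _ _ A (continuous_gridSum _).continuousOn
      (continuous_gridSum _).continuousOn, ← cfc_const_zero ℝ A]
    exact cfc_congr fun x _ => gridSum_block_mul_eq_zero hm hIJ (hs I hI J hJ) x
  have hQ : ‖∑ I ∈ s, star (cfc (gridSum a h (partners n m r I)) B)
      * cfc (gridSum a h (partners n m r I)) B‖ ≤ 4 ^ 2 := by
    simp only [star_cfc]
    rw [← sum_congr rfl fun I _ => cfc_mul _ _ B (continuous_gridSum _).continuousOn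
      (continuous_gridSum _).continuousOn,
      ← cfc_sum (fun I x => gridSum a h (partners n m r I) x * gridSum a h (partners n m r I) x) B s
        fun I _ => ((continuous_gridSum _).mul (continuous_gridSum _)).continuousOn]
    refine norm_cfc_le (by norm_num) fun x _ => ?_
    rw [Finset.sum_apply, Real.norm_of_nonneg (sum_nonneg fun I _ => mul_self_nonneg _)]
    simpa only [sq] using sum_sq_gridSum_partners_le hr s x
  refine (pow_le_pow_iff_left₀ (norm_nonneg _) (by positivity) two_ne_zero).1 ?_
  calc _ ≤ c ^ 2 * 4 ^ 2 := (norm_sum_mul_mul_sq_le s _ Z _ horth hZ).trans (by gcongr)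
    _ = (4 * c) ^ 2 := by ring

theorem norm_blockSum_le (hh : 0 < h) (hm : 0 < m)
    (hBspec : spectrum ℝ B ⊆ Set.Icc a (a + n * h)) {r : ℕ → ℕ → Prop} [DecidableRel r]
    (hr : ∀ I J, r I J → I ≤ J + 7 ∧ J ≤ I + 7) {c : ℝ}
    (hterm : ∀ I, ‖cfc (gridSum a h (block n m I)) A * Y
      * cfc (gridSum a h (thicken n (partners n m r I))) B‖ ≤ c) :
    ‖blockSum A B Y a h n (fun i j => r (i / m) (j / m))‖ ≤ 8 * c := by
  have hc : 0 ≤ c := (norm_nonneg _).trans (hterm 0)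
  -- The thickened partner bump is `1` on the support of the partner bump, so it can be inserted
  -- between `Y` and the partner bump, which puts each term in the form `P I * Z I * Q I`.
  have hthicken : ∀ I, cfc (gridSum a h (thicken n (partners n m r I))) B
      * cfc (gridSum a h (partners n m r I)) B = cfc (gridSum a h (partners n m r I)) B := by
    intro I
    rw [← cfc_mul _ _ B (continuous_gridSum _).continuousOn (continuous_gridSum _).continuousOn]
    refine cfc_congr fun x hx => ?_
    by_cases h₀ : gridSum a h (partners n m r I) x = 0
    · rw [h₀, mul_zero]
    · rw [gridSum_thicken_eq_one hh (hBspec hx) h₀, one_mul]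
  have hparity : ∀ s : Finset ℕ, (∀ I ∈ s, ∀ J ∈ s, I % 2 = J % 2) →
      ‖∑ I ∈ s, cfc (gridSum a h (block n m I)) A * Y
        * cfc (gridSum a h (partners n m r I)) B‖ ≤ 4 * c := fun s hs => by
    rw [sum_congr rfl fun I _ => (show cfc (gridSum a h (block n m I)) A * Y
        * cfc (gridSum a h (partners n m r I)) B = cfc (gridSum a h (block n m I)) A
        * (Y * cfc (gridSum a h (thicken n (partners n m r I))) B)
        * cfc (gridSum a h (partners n m r I)) B by simp only [mul_assoc, hthicken])]
    exact norm_sum_block_mul_le hm hr s hs _ hc fun I _ => by rw [← mul_assoc]; exact hterm I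
  rw [blockSum_eq_sum_block, ← sum_filter_add_sum_filter_not _ (fun I => I % 2 = 0)]
  refine (norm_add_le _ _).trans ?_
  have h₁ := hparity {I ∈ range (n / m + 1) | I % 2 = 0} fun I hI J hJ => by
    simp only [mem_filter] at hI hJ; omega
  have h₂ := hparity {I ∈ range (n / m + 1) | ¬ I % 2 = 0} fun I hI J hJ => by
    simp only [mem_filter] at hI hJ; omega
  linarith

end BlockSums

section Pairs

variable {𝒜 : Type*} [CStarAlgebra 𝒜] {A B : 𝒜} {a h ω : ℝ} {n m : ℕ} {F : ℝ → ℝ}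

theorem abs_mul_le_of_support {g u : ℝ → ℝ} {C : ℝ} (hC : 0 ≤ C) (hu₀ : ∀ x, 0 ≤ u x)
    (hu₁ : ∀ x, u x ≤ 1) (hg : ∀ x, u x ≠ 0 → |g x| ≤ C) (x : ℝ) : |g x * u x| ≤ C := by
  by_cases hx : u x = 0
  · simpa [hx] using hC
  · rw [abs_mul, abs_of_nonneg (hu₀ x)]
    nlinarith [hg x hx, hu₀ x, hu₁ x, abs_nonneg (g x)]

theorem abs_sub_mul_gridSum_block_le (hh : 0 < h) (hm : 0 < m) (hF : LipschitzAtScale F h ω)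
    (I : ℕ) (x : ℝ) :
    |(F x - F (a + I * m * h)) * gridSum a h (block n m I) x| ≤ m * ω := by
  refine abs_mul_le_of_support (g := fun y => F y - F (a + I * m * h))
    (mul_nonneg (by positivity) (hF.nonneg hh.le)) (gridSum_nonneg _) (gridSum_le_one _)
    (fun y hy => hF m y _ ?_) x
  rw [abs_sub_eq_mul_abs_div hh, mul_comm]
  exact mul_le_mul_of_nonneg_right (abs_sub_le_of_gridSum_block_ne_zero hm hy) hh.le

theorem abs_sub_mul_gridSum_thicken_le (hh : 0 < h) (hm : 0 < m) (hF : LipschitzAtScale F h ω)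
    {r : ℕ → ℕ → Prop} [DecidableRel r] (hr : ∀ I J, r I J → I ≤ J + 7 ∧ J ≤ I + 7)
    (I : ℕ) (x : ℝ) :
    |(F x - F (a + I * m * h)) * gridSum a h (thicken n (partners n m r I)) x| ≤ 9 * m * ω := by
  refine abs_mul_le_of_support (g := fun y => F y - F (a + I * m * h))
    (mul_nonneg (by positivity) (hF.nonneg hh.le)) (gridSum_nonneg _) (gridSum_le_one _)
    (fun y hy => ?_) x
  have hy' : |y - (a + I * m * h)| ≤ (9 * m : ℕ) * h := by
    rw [abs_sub_eq_mul_abs_div hh, mul_comm]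
    push_cast
    exact mul_le_mul_of_nonneg_right (abs_sub_le_of_gridSum_thicken_ne_zero hm hr hy) hh.le
  simpa using hF (9 * m) y _ hy'

theorem norm_cfc_gridSum_le_one (T : 𝒜) (S : Finset ℕ) : ‖cfc (gridSum a h S) T‖ ≤ 1 :=
  norm_cfc_le zero_le_one fun x _ => abs_gridSum_le_one S x

theorem norm_blockTerm_le (hh : 0 < h) (hm : 0 < m) {r : ℕ → ℕ → Prop} [DecidableRel r]
    (hr : ∀ I J, r I J → I ≤ J + 7 ∧ J ≤ I + 7) (hFc : Continuous F)
    (hF : LipschitzAtScale F h ω) (I : ℕ) :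
    ‖cfc (gridSum a h (block n m I)) A * (cfc F A - cfc F B)
      * cfc (gridSum a h (thicken n (partners n m r I))) B‖ ≤ 10 * m * ω := by
  have hω := hF.nonneg hh.le
  rw [cfc_mul_sub_mul_cfc hFc (continuous_gridSum _) (continuous_gridSum _) (F (a + I * m * h))]
  have h₁ : ‖cfc (fun x => (F x - F (a + I * m * h)) * gridSum a h (block n m I) x) A‖ ≤ m * ω :=
    norm_cfc_le (by positivity) fun x _ => abs_sub_mul_gridSum_block_le hh hm hF I x
  have h₂ : ‖cfc (fun x => (F x - F (a + I * m * h))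
      * gridSum a h (thicken n (partners n m r I)) x) B‖ ≤ 9 * m * ω :=
    norm_cfc_le (by positivity) fun x _ => abs_sub_mul_gridSum_thicken_le hh hm hF hr I x
  calc _ ≤ _ := (norm_sub_le _ _).trans (add_le_add (norm_mul_le _ _) (norm_mul_le _ _))
    _ ≤ m * ω * 1 + 1 * (9 * m * ω) := by
        gcongr
        exacts [norm_cfc_gridSum_le_one _ _, norm_cfc_gridSum_le_one _ _]
    _ = 10 * m * ω := by ring

theorem norm_blockTerm_le_of_far (hA : IsSelfAdjoint A) (hB : IsSelfAdjoint B) (hh : 0 < h)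
    (hm : 0 < m) (hAB : ‖A - B‖ ≤ 2 * h) {r : ℕ → ℕ → Prop} [DecidableRel r]
    (hfar : ∀ I J, r I J → I + 4 ≤ J ∨ J + 4 ≤ I) (hr : ∀ I J, r I J → I ≤ J + 7 ∧ J ≤ I + 7)
    (hFc : Continuous F) (hF : LipschitzAtScale F h ω) (I : ℕ) :
    ‖cfc (gridSum a h (block n m I)) A * (cfc F A - cfc F B)
      * cfc (gridSum a h (thicken n (partners n m r I))) B‖ ≤ 20 * ω := by
  have hω := hF.nonneg hh.le
  have hmh : 0 < m * h := mul_pos (by exact_mod_cast hm) hh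
  set μ := a + I * m * h
  have hψ : ∀ x, gridSum a h (block n m I) x ≠ 0 → |x - μ| ≤ m * h := fun x hx => by
    rw [abs_sub_eq_mul_abs_div hh, mul_comm]
    exact mul_le_mul_of_nonneg_right (abs_sub_le_of_gridSum_block_ne_zero hm hx) hh.le
  have hw : ∀ x, gridSum a h (thicken n (partners n m r I)) x ≠ 0 → 2 * m * h ≤ |x - μ| :=
    fun x hx => by
      rw [abs_sub_eq_mul_abs_div hh]
      nlinarith [le_abs_sub_of_gridSum_thicken_ne_zero hm hfar hx]
  rw [cfc_mul_sub_mul_cfc hFc (continuous_gridSum _) (continuous_gridSum _) (F μ)]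
  have h₁ := norm_cfc_mul_cfc_le_of_separated hA hB
    ((hFc.sub continuous_const).mul (continuous_gridSum _)) (continuous_gridSum _)
    hmh.le (by linarith) (fun x hx => hψ x (right_ne_zero_of_mul hx)) hw
    (abs_sub_mul_gridSum_block_le hh hm hF I) (abs_gridSum_le_one _)
  have h₂ := norm_cfc_mul_cfc_le_of_separated hA hB (continuous_gridSum _)
    ((hFc.sub continuous_const).mul (continuous_gridSum _))
    hmh.le (by linarith) hψ (fun x hx => hw x (right_ne_zero_of_mul hx))
    (abs_gridSum_le_one _) (abs_sub_mul_gridSum_thicken_le hh hm hF hr I)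
  calc _ ≤ _ := (norm_sub_le _ _).trans (add_le_add h₁ h₂)
    _ = 10 * ω * ‖A - B‖ / h := by field_simp; ring
    _ ≤ 20 * ω := by rw [div_le_iff₀ hh]; nlinarith

end Pairs

/-! ### The dyadic decomposition -/

def Near (I J : ℕ) : Prop := I ≤ J + 3 ∧ J ≤ I + 3

instance : DecidableRel Near := fun I J => inferInstanceAs (Decidable (I ≤ J + 3 ∧ J ≤ I + 3))

def NewlyNear (I J : ℕ) : Prop := Near (I / 2) (J / 2) ∧ ¬ Near I J

instance : DecidableRel NewlyNear := fun I J =>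
  inferInstanceAs (Decidable (Near (I / 2) (J / 2) ∧ ¬ Near I J))

theorem Near.window {I J : ℕ} (h : Near I J) : I ≤ J + 7 ∧ J ≤ I + 7 := by
  unfold Near at h; omega

theorem NewlyNear.window {I J : ℕ} (h : NewlyNear I J) : I ≤ J + 7 ∧ J ≤ I + 7 := by
  unfold NewlyNear Near at h; omega

theorem NewlyNear.far {I J : ℕ} (h : NewlyNear I J) : I + 4 ≤ J ∨ J + 4 ≤ I := by
  unfold NewlyNear Near at h; omega

section Levels

variable {𝒜 : Type*} [CStarAlgebra 𝒜] {A B Y : 𝒜} {a h ω : ℝ} {n : ℕ} {F : ℝ → ℝ}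

def levelSum (A B Y : 𝒜) (a h : ℝ) (n k : ℕ) : 𝒜 :=
  blockSum A B Y a h n (fun i j => Near (i / 2 ^ k) (j / 2 ^ k))

theorem levelSum_pow_self (hA : IsSelfAdjoint A) (hB : IsSelfAdjoint B) (hh : 0 < h) {M : ℕ}
    (hAspec : spectrum ℝ A ⊆ Set.Icc a (a + 2 ^ M * h))
    (hBspec : spectrum ℝ B ⊆ Set.Icc a (a + 2 ^ M * h)) : levelSum A B Y a h (2 ^ M) M = Y := by
  refine blockSum_of_forall hA hB hh (by exact_mod_cast hAspec) (by exact_mod_cast hBspec)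
    fun i hi j hj => ?_
  have hdiv : ∀ i ∈ range (2 ^ M + 1), i / 2 ^ M ≤ 1 := fun i hi =>
    (Nat.div_le_div_right (mem_range_succ_iff.1 hi)).trans (Nat.div_self (by positivity)).le
  exact ⟨(hdiv i hi).trans (le_add_left (by norm_num)),
    (hdiv j hj).trans (le_add_left (by norm_num))⟩

theorem levelSum_succ_sub (k : ℕ) :
    levelSum A B Y a h n (k + 1) - levelSum A B Y a h n k
      = blockSum A B Y a h n (fun i j => NewlyNear (i / 2 ^ k) (j / 2 ^ k)) := by
  have hdiv : ∀ i : ℕ, i / 2 ^ (k + 1) = i / 2 ^ k / 2 := fun i => by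
    rw [pow_succ, Nat.div_div_eq_div_mul]
  rw [levelSum, levelSum, blockSum_congr (r' := fun i j => Near (i / 2 ^ k / 2) (j / 2 ^ k / 2))
    fun i j => by rw [hdiv, hdiv], blockSum_sub_blockSum fun i j h => by unfold Near at *; omega]
  rfl

variable [PartialOrder 𝒜] [StarOrderedRing 𝒜]

theorem norm_levelSum_zero_le (hh : 0 < h) (hBspec : spectrum ℝ B ⊆ Set.Icc a (a + n * h))
    (hFc : Continuous F) (hF : LipschitzAtScale F h ω) :
    ‖levelSum A B (cfc F A - cfc F B) a h n 0‖ ≤ 8 * (10 * ω) :=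
  norm_blockSum_le hh (pow_pos two_pos 0) hBspec (fun _ _ h => h.window) fun I => by
    simpa using norm_blockTerm_le hh (pow_pos two_pos 0) (fun _ _ h => Near.window h) hFc hF I

theorem norm_levelSum_succ_sub_le (hA : IsSelfAdjoint A) (hB : IsSelfAdjoint B) (hh : 0 < h)
    (hAB : ‖A - B‖ ≤ 2 * h) (hBspec : spectrum ℝ B ⊆ Set.Icc a (a + n * h))
    (hFc : Continuous F) (hF : LipschitzAtScale F h ω) (k : ℕ) :
    ‖levelSum A B (cfc F A - cfc F B) a h n (k + 1) - levelSum A B (cfc F A - cfc F B) a h n k‖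
      ≤ 8 * (20 * ω) := by
  rw [levelSum_succ_sub]
  exact norm_blockSum_le hh (pow_pos two_pos k) hBspec (fun _ _ h => h.window) fun I =>
    norm_blockTerm_le_of_far hA hB hh (pow_pos two_pos k) hAB (fun _ _ h => h.far)
      (fun _ _ h => h.window) hFc hF I

theorem norm_cfc_sub_cfc_le_of_lipschitzAtScale (hA : IsSelfAdjoint A) (hB : IsSelfAdjoint B)
    (hh : 0 < h) (M : ℕ) (hAspec : spectrum ℝ A ⊆ Set.Icc a (a + 2 ^ M * h))
    (hBspec : spectrum ℝ B ⊆ Set.Icc a (a + 2 ^ M * h)) (hAB : ‖A - B‖ ≤ 2 * h)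
    (hFc : Continuous F) (hF : LipschitzAtScale F h ω) :
    ‖cfc F A - cfc F B‖ ≤ (M + 1) * (160 * ω) := by
  have hω := hF.nonneg hh.le
  have hBspec' : spectrum ℝ B ⊆ Set.Icc a (a + (2 ^ M : ℕ) * h) := by exact_mod_cast hBspec
  set L := levelSum A B (cfc F A - cfc F B) a h (2 ^ M)
  have htop : L M = cfc F A - cfc F B := levelSum_pow_self hA hB hh hAspec hBspec
  have htel : cfc F A - cfc F B = L 0 + ∑ k ∈ range M, (L (k + 1) - L k) := by
    rw [sum_range_sub, htop]; abel
  calc ‖cfc F A - cfc F B‖ ≤ ‖L 0‖ + ∑ k ∈ range M, ‖L (k + 1) - L k‖ := by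
        rw [htel]; exact (norm_add_le _ _).trans (add_le_add le_rfl (norm_sum_le _ _))
    _ ≤ 8 * (10 * ω) + ∑ k ∈ range M, 8 * (20 * ω) :=
        add_le_add (norm_levelSum_zero_le hh hBspec' hFc hF)
          (sum_le_sum fun k _ => norm_levelSum_succ_sub_le hA hB hh hAB hBspec' hFc hF k)
    _ ≤ (M + 1) * (160 * ω) := by
        rw [sum_const, card_range, nsmul_eq_mul]; nlinarith

end Levels

theorem exists_dyadic_scale {L δ : ℝ} (hδ : 0 < δ) (hδL : δ ≤ L) :
    ∃ M : ℕ, L / 2 ^ M ≤ δ ∧ δ ≤ 2 * (L / 2 ^ M) ∧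
      (M : ℝ) + 1 ≤ 2 * Real.log (Real.exp 1 * L / δ) := by
  obtain ⟨k, hk₁, hk₂⟩ := exists_nat_pow_near ((one_le_div hδ).2 hδL) one_lt_two
  rw [le_div_iff₀ hδ] at hk₁
  rw [div_lt_iff₀ hδ] at hk₂
  refine ⟨k + 1, ?_, ?_, ?_⟩
  · rw [div_le_iff₀ (by positivity)]; linarith
  · rw [pow_succ, ← div_div, mul_div_cancel₀ _ two_ne_zero, le_div_iff₀ (by positivity)]; linarith
  · have hlog : k * Real.log 2 ≤ Real.log (L / δ) := by
      rw [← Real.log_pow]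
      exact Real.log_le_log (by positivity) ((le_div_iff₀ hδ).2 hk₁)
    have hlog2 : 1 / 2 < Real.log 2 := by linarith [Real.log_two_gt_d9]
    rw [mul_div_assoc, Real.log_mul (Real.exp_ne_zero 1) (div_pos (hδ.trans_le hδL) hδ).ne',
      Real.log_exp]
    push_cast
    nlinarith [Real.log_nonneg ((one_le_div hδ).2 hδL)]

end OperatorModulus

open OperatorModulus in
/-- Logarithmic estimate of `‖f(A) − f(B)‖` in terms of the modulus of continuity of a
continuous function `f` on `[a,b]`, for bounded self-adjoint operators `A`, `B` with
spectra in `[a,b]`: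
`‖f(A) − f(B)‖ ≤ c·log(e·(b−a)/‖A−B‖)·ω_f(‖A−B‖)`, where
`ω_f(δ) = sup { |f(x) − f(y)| : x, y ∈ [a,b], |x−y| ≤ δ }`. -/
theorem operator_estimate_log_modulus :
    ∃ c : ℝ, 0 < c ∧
      ∀ (H : Type*) [NormedAddCommGroup H] [InnerProductSpace ℂ H] [CompleteSpace H],
      ∀ (a b : ℝ), a < b →
      ∀ (A B : H →L[ℂ] H), IsSelfAdjoint A → IsSelfAdjoint B →
        spectrum ℝ A ⊆ Set.Icc a b → spectrum ℝ B ⊆ Set.Icc a b → A ≠ B →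
      ∀ (f : ℝ → ℝ), ContinuousOn f (Set.Icc a b) →
        ‖cfc f A - cfc f B‖ ≤
          c * Real.log (Real.exp 1 * (b - a) / ‖A - B‖) *
            sSup {d : ℝ | ∃ x ∈ Set.Icc a b, ∃ y ∈ Set.Icc a b,
              |x - y| ≤ ‖A - B‖ ∧ d = |f x - f y|} := by
  refine ⟨320, by norm_num, fun H _ _ _ a b hab A B hA hB hAab hBab hAB f hf => ?_⟩
  have hδ : 0 < ‖A - B‖ := norm_pos_iff.2 (sub_ne_zero.2 hAB)
  obtain ⟨M, hhδ, hδh, hM⟩ :=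
    exists_dyadic_scale hδ (norm_sub_le_of_spectrum_subset_Icc hA hB hab.le hAab hBab)
  set h := (b - a) / 2 ^ M
  have hh : 0 < h := div_pos (sub_pos.2 hab) (by positivity)
  have hb : a + 2 ^ M * h = b := by simp only [h]; field_simp; ring
  -- Extending `f` constantly outside `[a, b]` changes neither `f(A)`, `f(B)` nor `ω_f`.
  have hF := lipschitzAtScale_comp_projIcc hab.le hf hh.le hhδ
  have hext : ∀ T : H →L[ℂ] H, spectrum ℝ T ⊆ Set.Icc a b →
      cfc f T = cfc (fun x => f (Set.projIcc a b hab.le x)) T := fun T hT =>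
    cfc_congr fun x hx => by rw [Set.projIcc_of_mem _ (hT hx)]
  rw [hext A hAab, hext B hBab]
  calc _ ≤ (M + 1) * (160 * modulusOfContinuity f (Set.Icc a b) ‖A - B‖) :=
        norm_cfc_sub_cfc_le_of_lipschitzAtScale hA hB hh M (by rwa [hb]) (by rwa [hb]) hδh
          (hf.comp_continuous (continuous_subtype_val.comp continuous_projIcc)
            fun x => (Set.projIcc a b hab.le x).2) hF
    _ ≤ 320 * Real.log (Real.exp 1 * (b - a) / ‖A - B‖)
          * modulusOfContinuity f (Set.Icc a b) ‖A - B‖ := by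
        nlinarith [hF.nonneg hh.le]
end
end

section
/- There is an absolute constant c > 0 with the following property. Let M > 0 and let f : ℝ² → ℂ be the restriction to ℝ² of an entire function F : ℂ² → ℂ satisfying |F(z₁, z₂)| ≤ M·exp(√((Im z₁)² + (Im z₂)²)) for all (z₁, z₂) ∈ ℂ² (equivalently, f is bounded by M with Fourier transform supported in the closed unit ball of ℝ²). For y ∈ ℝ define the matrix a_{jk}(y), (j, k) ∈ ℤ², by a_{jk}(y) = (f(jπ, y) − f(kπ, y))/(jπ − kπ) for j ≠ k and a_{jj}(y) = ∂f/∂x (jπ, y). Then for every y ∈ ℝ and all finitely supported families (ξ_k)_{k∈ℤ}, (η_j)_{j∈ℤ} of complex numbers, |Σ_{j,k∈ℤ} a_{jk}(y)·ξ_k·conj(η_j)| ≤ c·M·(Σ_k |ξ_k|²)^{1/2}·(Σ_j |η_j|²)^{1/2}; that is, the matrix {a_{jk}(y)} induces a bounded operator on ℓ²(ℤ) of norm at most c·M. -/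
/-!
Split the matrix into its diagonal and its off-diagonal part. The diagonal entries are
derivatives `∂ₓf(jπ, y)`, bounded by `M e` by Cauchy's estimate on the unit circle around a real
point, where `|Im z| ≤ 1`. Off the diagonal, with `G j = f(jπ, y)` (bounded by `M`) and the Hilbert
matrix `H j k = 1 / (j - k)`, the entry is `π⁻¹ (G j H j k - H j k G k)`. The Hilbert matrix is the
Toeplitz matrix of the Fourier coefficients of the sawtooth `i (π - θ)` on `[0, 2π]`, so by
Parseval its norm on `ℓ²(ℤ)` is at most `sup |i (π - θ)| = π`. Altogether `c = 2 + e` works.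
-/

open Finset MeasureTheory Set Real
open scoped ComplexConjugate

def matrixPairing (A : ℤ → ℤ → ℂ) (s t : Finset ℤ) (ξ η : ℤ → ℂ) : ℂ :=
  ∑ j ∈ t, ∑ k ∈ s, A j k * ξ k * conj (η j)

def IsL2Bounded (A : ℤ → ℤ → ℂ) (C : ℝ) : Prop :=
  ∀ (s t : Finset ℤ) (ξ η : ℤ → ℂ),
    ‖matrixPairing A s t ξ η‖ ≤ C * √(∑ k ∈ s, ‖ξ k‖ ^ 2) * √(∑ j ∈ t, ‖η j‖ ^ 2)

theorem sqrt_sum_norm_mul_sq_le {d : ℤ → ℂ} {m : ℝ} (hd : ∀ j, ‖d j‖ ≤ m) (s : Finset ℤ)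
    (ξ : ℤ → ℂ) : √(∑ k ∈ s, ‖d k * ξ k‖ ^ 2) ≤ m * √(∑ k ∈ s, ‖ξ k‖ ^ 2) := by
  have hm : 0 ≤ m := (norm_nonneg _).trans (hd 0)
  rw [← Real.sqrt_sq hm, ← Real.sqrt_mul (sq_nonneg m), mul_sum]
  gcongr with k
  rw [norm_mul, mul_pow]
  gcongr
  exact hd k

namespace IsL2Bounded

variable {A B : ℤ → ℤ → ℂ} {C D : ℝ}

theorem add (hA : IsL2Bounded A C) (hB : IsL2Bounded B D) :
    IsL2Bounded (fun j k => A j k + B j k) (C + D) := by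
  intro s t ξ η
  have h : matrixPairing (fun j k => A j k + B j k) s t ξ η
      = matrixPairing A s t ξ η + matrixPairing B s t ξ η := by
    simp only [matrixPairing, add_mul, sum_add_distrib]
  rw [h, add_mul, add_mul]
  exact (norm_add_le _ _).trans (add_le_add (hA s t ξ η) (hB s t ξ η))

theorem sub (hA : IsL2Bounded A C) (hB : IsL2Bounded B D) :
    IsL2Bounded (fun j k => A j k - B j k) (C + D) := by
  intro s t ξ η
  have h : matrixPairing (fun j k => A j k - B j k) s t ξ η
      = matrixPairing A s t ξ η - matrixPairing B s t ξ η := by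
    simp only [matrixPairing, sub_mul, sum_sub_distrib]
  rw [h, add_mul, add_mul]
  exact (norm_sub_le _ _).trans (add_le_add (hA s t ξ η) (hB s t ξ η))

theorem const_mul (hA : IsL2Bounded A C) (c : ℂ) :
    IsL2Bounded (fun j k => c * A j k) (‖c‖ * C) := by
  intro s t ξ η
  have h : matrixPairing (fun j k => c * A j k) s t ξ η = c * matrixPairing A s t ξ η := by
    simp only [matrixPairing, mul_sum, mul_assoc]
  rw [h, norm_mul, mul_assoc, mul_assoc]
  gcongr
  rw [← mul_assoc]
  exact hA s t ξ η

theorem mul_left (hA : IsL2Bounded A C) (hC : 0 ≤ C) {d : ℤ → ℂ} {m : ℝ} (hd : ∀ j, ‖d j‖ ≤ m) :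
    IsL2Bounded (fun j k => d j * A j k) (C * m) := by
  intro s t ξ η
  have h : matrixPairing (fun j k => d j * A j k) s t ξ η
      = matrixPairing A s t ξ (fun j => conj (d j) * η j) := by
    simp only [matrixPairing, map_mul, Complex.conj_conj]
    exact sum_congr rfl fun j _ => sum_congr rfl fun k _ => by ring
  have hd' (j : ℤ) : ‖conj (d j)‖ ≤ m := (Complex.norm_conj _).trans_le (hd j)
  rw [h]
  refine (hA s t ξ _).trans ?_
  rw [mul_right_comm C m, mul_assoc (C * _)]
  gcongr
  exact sqrt_sum_norm_mul_sq_le hd' t η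

theorem mul_right (hA : IsL2Bounded A C) (hC : 0 ≤ C) {d : ℤ → ℂ} {m : ℝ} (hd : ∀ k, ‖d k‖ ≤ m) :
    IsL2Bounded (fun j k => A j k * d k) (C * m) := by
  intro s t ξ η
  have h : matrixPairing (fun j k => A j k * d k) s t ξ η
      = matrixPairing A s t (fun k => d k * ξ k) η := by
    simp only [matrixPairing]
    exact sum_congr rfl fun j _ => sum_congr rfl fun k _ => by ring
  rw [h]
  refine (hA s t _ η).trans ?_
  rw [mul_assoc C m]
  gcongr
  exact sqrt_sum_norm_mul_sq_le hd s ξ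

end IsL2Bounded

theorem intervalIntegral_mul_le_sqrt_mul_sqrt {a b : ℝ} (hab : a ≤ b) {f g : ℝ → ℝ}
    (hf : Continuous f) (hg : Continuous g) (hf₀ : 0 ≤ f) (hg₀ : 0 ≤ g) :
    ∫ x in a..b, f x * g x ≤ √(∫ x in a..b, f x ^ 2) * √(∫ x in a..b, g x ^ 2) := by
  have hL2 {h : ℝ → ℝ} (hh : Continuous h) :
      MemLp h (ENNReal.ofReal 2) (volume.restrict (Ioc a b)) := by
    rw [ENNReal.ofReal_ofNat, memLp_two_iff_integrable_sq hh.aestronglyMeasurable]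
    exact (hh.pow 2).integrableOn_Ioc
  simp only [intervalIntegral.integral_of_le hab, Real.sqrt_eq_rpow, ← Real.rpow_two]
  exact integral_mul_le_Lp_mul_Lq_of_nonneg Real.HolderConjugate.two_two (ae_of_all _ hf₀)
    (ae_of_all _ hg₀) (hL2 hf) (hL2 hg)

section FourierCoeff

variable {a b : ℝ}

theorem fourierCoeffOn_const (hab : a < b) (c : ℂ) (n : ℤ) :
    fourierCoeffOn hab (fun _ => c) n = if n = 0 then c else 0 := by
  split_ifs with hn
  · rw [fourierCoeffOn_eq_integral, hn]
    simp only [neg_zero, fourier_zero, one_smul, intervalIntegral.integral_const]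
    rw [smul_smul, one_div_mul_cancel (sub_ne_zero.mpr hab.ne'), one_smul]
  · rw [fourierCoeffOn_of_hasDerivAt hab hn (fun x _ => hasDerivAt_const x c)
      intervalIntegrable_const, sub_self, mul_zero, zero_sub]
    have hzero : fourierCoeffOn hab (fun _ : ℝ => (0 : ℂ)) n = 0 := by
      simpa using fourierCoeffOn.const_mul (fun _ => (1 : ℂ)) 0 n hab
    simp [hzero]

noncomputable def trigPoly (T : ℝ) (s : Finset ℤ) (u : ℤ → ℂ) (x : ℝ) : ℂ :=
  ∑ k ∈ s, u k * fourier k (x : AddCircle T)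

theorem continuous_trigPoly (T : ℝ) (s : Finset ℤ) (u : ℤ → ℂ) :
    Continuous (trigPoly T s u) :=
  continuous_finsetSum _ fun k _ =>
    continuous_const.mul ((fourier k).continuous.comp (AddCircle.continuous_mk' T))

theorem trigPoly_mul_conj_trigPoly (T : ℝ) (s t : Finset ℤ) (u v : ℤ → ℂ) (x : ℝ) :
    trigPoly T s u x * conj (trigPoly T t v x)
      = ∑ j ∈ t, ∑ k ∈ s, u k * conj (v j) * fourier (-(j - k)) (x : AddCircle T) := by
  rw [trigPoly, trigPoly, map_sum, sum_mul_sum, sum_comm]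
  refine sum_congr rfl fun j _ => sum_congr rfl fun k _ => ?_
  rw [map_mul, ← fourier_neg, neg_sub, sub_eq_add_neg, fourier_add]
  ring

theorem integral_mul_trigPoly_mul_conj (hab : a < b) {K : ℝ → ℂ}
    (hK : IntervalIntegrable K volume a b) (s t : Finset ℤ) (u v : ℤ → ℂ) :
    ∫ x in a..b, K x * (trigPoly (b - a) s u x * conj (trigPoly (b - a) t v x))
      = (b - a) * matrixPairing (fun j k => fourierCoeffOn hab K (j - k)) s t u v := by
  have hba : (b - a : ℂ) ≠ 0 := by exact_mod_cast (sub_pos.mpr hab).ne'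
  have hfourier (n : ℤ) : Continuous fun x : ℝ => fourier n (x : AddCircle (b - a)) :=
    (fourier n).continuous.comp (AddCircle.continuous_mk' _)
  simp_rw [trigPoly_mul_conj_trigPoly, mul_sum, matrixPairing, fourierCoeffOn_eq_integral]
  have hterm (j k : ℤ) : IntervalIntegrable
      (fun x => K x * (u k * conj (v j) * fourier (-(j - k)) (x : AddCircle (b - a)))) volume a b :=
    hK.mul_continuousOn (continuous_const.mul (hfourier _)).continuousOn
  rw [intervalIntegral.integral_finsetSum fun j _ => by
    simpa only [Finset.sum_fn] using IntervalIntegrable.sum s fun k _ => hterm j k, mul_sum]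
  refine sum_congr rfl fun j _ => ?_
  rw [intervalIntegral.integral_finsetSum fun k _ => hterm j k, mul_sum]
  refine sum_congr rfl fun k _ => ?_
  have hc := fun x : ℝ => (smul_eq_mul (fourier (-(j - k)) (x : AddCircle (b - a))) (K x)).symm
  simp_rw [mul_comm (K _), mul_assoc, hc, intervalIntegral.integral_const_mul, Complex.real_smul]
  push_cast
  field_simp

theorem integral_norm_sq_trigPoly (hab : a < b) (s : Finset ℤ) (u : ℤ → ℂ) :
    ∫ x in a..b, ‖trigPoly (b - a) s u x‖ ^ 2 = (b - a) * ∑ k ∈ s, ‖u k‖ ^ 2 := by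
  have h := integral_mul_trigPoly_mul_conj hab (intervalIntegrable_const (c := (1 : ℂ))) s s u u
  simp_rw [one_mul, Complex.mul_conj', fourierCoeffOn_const, sub_eq_zero, matrixPairing,
    ite_mul, one_mul, zero_mul, sum_ite_eq, Complex.mul_conj'] at h
  simp only [sum_ite_mem, Finset.inter_self, ← Complex.ofReal_pow, ← Complex.ofReal_sum,
    intervalIntegral.integral_ofReal] at h
  exact_mod_cast h

theorem isL2Bounded_fourierCoeffOn (hab : a < b) {K : ℝ → ℂ}
    (hK : IntervalIntegrable K volume a b) {B : ℝ} (hB : ∀ x ∈ Ioc a b, ‖K x‖ ≤ B) :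
    IsL2Bounded (fun j k => fourierCoeffOn hab K (j - k)) B := by
  intro s t ξ η
  set P := trigPoly (b - a) s ξ
  set Q := trigPoly (b - a) t η
  have hba : 0 < b - a := sub_pos.mpr hab
  have hB₀ : 0 ≤ B := (norm_nonneg _).trans (hB b ⟨hab, le_rfl⟩)
  have hPQ : Continuous fun x => ‖P x‖ * ‖Q x‖ :=
    (continuous_trigPoly _ _ _).norm.mul (continuous_trigPoly _ _ _).norm
  refine le_of_mul_le_mul_left ?_ hba
  calc (b - a) * ‖matrixPairing (fun j k => fourierCoeffOn hab K (j - k)) s t ξ η‖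
      = ‖∫ x in a..b, K x * (P x * conj (Q x))‖ := by
        rw [integral_mul_trigPoly_mul_conj hab hK, norm_mul,
          ← Complex.ofReal_sub, Complex.norm_real, Real.norm_of_nonneg hba.le]
    _ ≤ ∫ x in a..b, B * (‖P x‖ * ‖Q x‖) := by
        refine intervalIntegral.norm_integral_le_of_norm_le hab.le (ae_of_all _ fun x hx => ?_)
          ((continuous_const.mul hPQ).intervalIntegrable _ _)
        rw [norm_mul, norm_mul, Complex.norm_conj]
        exact mul_le_mul_of_nonneg_right (hB x hx) (by positivity)
    _ ≤ B * (√(∫ x in a..b, ‖P x‖ ^ 2) * √(∫ x in a..b, ‖Q x‖ ^ 2)) := by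
        rw [intervalIntegral.integral_const_mul]
        exact mul_le_mul_of_nonneg_left (intervalIntegral_mul_le_sqrt_mul_sqrt hab.le
          (continuous_trigPoly _ _ _).norm (continuous_trigPoly _ _ _).norm
          (fun _ => norm_nonneg _) (fun _ => norm_nonneg _)) hB₀
    _ = (b - a) * (B * √(∑ k ∈ s, ‖ξ k‖ ^ 2) * √(∑ j ∈ t, ‖η j‖ ^ 2)) := by
        rw [integral_norm_sq_trigPoly hab, integral_norm_sq_trigPoly hab,
          Real.sqrt_mul hba.le, Real.sqrt_mul hba.le, mul_mul_mul_comm,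
          Real.mul_self_sqrt hba.le]
        ring

end FourierCoeff

theorem fourierCoeffOn_sawtooth (n : ℤ) :
    fourierCoeffOn two_pi_pos (fun x : ℝ => Complex.I * ((π - x : ℝ) : ℂ)) n = (n : ℂ)⁻¹ := by
  rcases eq_or_ne n 0 with rfl | hn
  · have hmean : ∫ x in (0 : ℝ)..2 * π, (π - x) = 0 := by
      rw [intervalIntegral.integral_sub intervalIntegrable_const
        intervalIntegral.intervalIntegrable_id, intervalIntegral.integral_const, integral_id]
      ring
    rw [fourierCoeffOn_eq_integral]
    simp only [neg_zero, fourier_zero, one_smul, intervalIntegral.integral_const_mul,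
      intervalIntegral.integral_ofReal, hmean, Complex.ofReal_zero, mul_zero, smul_zero,
      Int.cast_zero, inv_zero]
  have hderiv (x : ℝ) :
      HasDerivAt (fun x : ℝ => Complex.I * ((π - x : ℝ) : ℂ)) (-Complex.I) x := by
    simpa using (((hasDerivAt_id x).const_sub π).ofReal_comp).const_mul Complex.I
  rw [fourierCoeffOn_of_hasDerivAt two_pi_pos hn (fun x _ => hderiv x) intervalIntegrable_const,
    fourierCoeffOn_const two_pi_pos, if_neg hn, QuotientAddGroup.mk_zero, fourier_eval_zero]
  push_cast
  field_simp
  ring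

theorem isL2Bounded_hilbert : IsL2Bounded (fun j k => ((j - k : ℤ) : ℂ)⁻¹) π := by
  have hcont : Continuous fun x : ℝ => Complex.I * ((π - x : ℝ) : ℂ) := by fun_prop
  have hbound (x : ℝ) (hx : x ∈ Ioc 0 (2 * π)) : ‖Complex.I * ((π - x : ℝ) : ℂ)‖ ≤ π := by
    rw [norm_mul, Complex.norm_I, one_mul, Complex.norm_real, Real.norm_eq_abs, abs_le]
    constructor <;> linarith [hx.1, hx.2]
  simpa only [fourierCoeffOn_sawtooth] using
    isL2Bounded_fourierCoeffOn two_pi_pos (hcont.intervalIntegrable _ _) hbound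

theorem isL2Bounded_diagonal {d : ℤ → ℂ} {m : ℝ} (hd : ∀ j, ‖d j‖ ≤ m) :
    IsL2Bounded (fun j k => if j = k then d j else 0) m := by
  have hone : IsL2Bounded (fun j k => fourierCoeffOn zero_lt_one (fun _ => (1 : ℂ)) (j - k)) 1 :=
    isL2Bounded_fourierCoeffOn zero_lt_one intervalIntegrable_const fun _ _ => norm_one.le
  simpa [fourierCoeffOn_const, sub_eq_zero] using hone.mul_left zero_le_one hd

theorem norm_deriv_le_of_norm_le_mul_exp_abs_im {g : ℂ → ℂ} (hg : Differentiable ℂ g) {M : ℝ}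
    (hM : ∀ z, ‖g z‖ ≤ M * Real.exp |z.im|) (x : ℝ) : ‖deriv g x‖ ≤ M * Real.exp 1 := by
  have hM₀ : 0 ≤ M := by simpa using (norm_nonneg _).trans (hM 0)
  have hsphere (z : ℂ) (hz : z ∈ Metric.sphere (x : ℂ) 1) : ‖g z‖ ≤ M * Real.exp 1 := by
    have him : |z.im| ≤ 1 := by
      simpa using (Complex.abs_im_le_norm (z - x)).trans_eq (mem_sphere_iff_norm.mp hz)
    exact (hM z).trans (by gcongr)
  simpa using Complex.norm_deriv_le_of_forall_mem_sphere_norm_le one_pos hg.diffContOnCl hsphere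

/-- The matrix `a_{jk}(y)` built from the divided difference in the first variable of a
function on `ℝ²` that is bounded by `M` with Fourier transform supported in the closed
unit ball (equivalently, restriction of an entire `F` on `ℂ²` with
`|F z| ≤ M·exp(‖Im z‖)`) induces a bounded operator on `ℓ²(ℤ)` of norm at most `c·M`
for an absolute constant `c`: for all finitely supported families `ξ, η`,
`|Σ_{j,k} a_{jk}(y)·ξ_k·conj(η_j)| ≤ c·M·(Σ|ξ_k|²)^{1/2}·(Σ|η_j|²)^{1/2}`. -/
theorem divided_difference_matrix_bounded :
    ∃ c : ℝ, 0 < c ∧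
      ∀ (M : ℝ), 0 < M →
      ∀ (f : ℝ → ℝ → ℂ) (F : ℂ × ℂ → ℂ), Differentiable ℂ F →
        (∀ z : ℂ × ℂ, ‖F z‖ ≤ M * Real.exp (Real.sqrt (z.1.im ^ 2 + z.2.im ^ 2))) →
        (∀ x y : ℝ, f x y = F ((x : ℂ), (y : ℂ))) →
      ∀ (y : ℝ) (s t : Finset ℤ) (ξ η : ℤ → ℂ),
        ‖∑ j ∈ t, ∑ k ∈ s,
            (if j = k then deriv (fun x : ℝ => f x y) ((j : ℝ) * Real.pi)
              else (f ((j : ℝ) * Real.pi) y - f ((k : ℝ) * Real.pi) y) /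
                (((j : ℝ) * Real.pi - (k : ℝ) * Real.pi : ℝ) : ℂ)) *
            ξ k * (starRingEnd ℂ) (η j)‖
          ≤ c * M * Real.sqrt (∑ k ∈ s, ‖ξ k‖ ^ 2) *
              Real.sqrt (∑ j ∈ t, ‖η j‖ ^ 2) := by
  refine ⟨2 + Real.exp 1, by positivity, fun M _ f F hF hFM hfF y => ?_⟩
  set g : ℂ → ℂ := fun z => F (z, y)
  have hg : Differentiable ℂ g := hF.comp (differentiable_id.prodMk (differentiable_const _))
  have hgM (z : ℂ) : ‖g z‖ ≤ M * Real.exp |z.im| := by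
    simpa [Real.sqrt_sq_eq_abs] using hFM (z, y)
  set G : ℤ → ℂ := fun j => f (j * π) y
  set d : ℤ → ℂ := fun j => deriv (fun x : ℝ => f x y) (j * π)
  have hG (j : ℤ) : ‖G j‖ ≤ M := by simpa [G, hfF] using hgM (j * π)
  have hd (j : ℤ) : ‖d j‖ ≤ M * Real.exp 1 := by
    have hderiv : deriv (fun x : ℝ => f x y) (j * π) = deriv g (j * π : ℝ) := by
      simp_rw [hfF]
      exact ((hg _).hasDerivAt.comp_ofReal).deriv
    simpa [d, hderiv] using norm_deriv_le_of_norm_le_mul_exp_abs_im hg hgM (j * π)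
  -- on the diagonal the second summand vanishes because `((0 : ℤ) : ℂ)⁻¹ = 0`
  have hsplit : (fun j k : ℤ => if j = k then d j else (G j - G k) / ((j * π - k * π : ℝ) : ℂ))
      = fun j k => (if j = k then d j else 0) + (π : ℂ)⁻¹ *
          (G j * ((j - k : ℤ) : ℂ)⁻¹ - ((j - k : ℤ) : ℂ)⁻¹ * G k) := by
    ext j k
    split_ifs with hjk
    · simp [hjk]
    · push_cast
      field_simp
      ring
  have hbound := (isL2Bounded_diagonal hd).add
    (((isL2Bounded_hilbert.mul_left pi_pos.le hG).sub
      (isL2Bounded_hilbert.mul_right pi_pos.le hG)).const_mul (π : ℂ)⁻¹)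
  have hC : M * Real.exp 1 + ‖(π : ℂ)⁻¹‖ * (π * M + π * M) = (2 + Real.exp 1) * M := by
    rw [norm_inv, Complex.norm_real, Real.norm_of_nonneg pi_pos.le]
    field_simp
    ring
  rw [hC, ← hsplit] at hbound
  exact hbound
end

section
/- There is an absolute constant c > 0 with the following property. For every integer m ≥ 1 and every analytic polynomial φ(z) = Σ_{n=0}^m c_n z^n of degree at most m, there exist continuous functions u_1, …, u_{2m} and v_1, …, v_{2m} on the unit circle 𝕋 = {ζ ∈ ℂ : |ζ| = 1} such that (φ(ζ) − φ(τ))/(ζ − τ) = Σ_{n=1}^{2m} u_n(ζ)·v_n(τ) for all ζ, τ ∈ 𝕋 with ζ ≠ τ, and Σ_{n=1}^{2m} (sup_{𝕋} |u_n|)·(sup_{𝕋} |v_n|) ≤ c·m·sup_{𝕋} |φ|. In other words, the divided difference of φ has projective tensor norm in C(𝕋) ⊗̂ C(𝕋) at most c·m·‖φ‖_{C(𝕋)}. -/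
/-!
The divided difference of `z ^ n` is `∑_{j + k = n - 1} ζ ^ j τ ^ k`. Split each term `ζ ^ j τ ^ k`
with weights `(j + 1) / (n + 1)` and `(k + 1) / (n + 1)` between two families, and collect the first
by the power of `τ` and the second by the power of `ζ`. This writes the divided difference of
`φ = ∑ c_n z ^ n` as the sum of the `2 m` products `ζ⁻¹ ^ (k + 1) g_k(ζ) · τ ^ k` and
`ζ ^ k · τ⁻¹ ^ (k + 1) g_k(τ)`, `k < m`, where `g_k = ∑ (n - k)₊ / (n + 1) · c_n z ^ n`.

It remains to show `‖g_k‖ ≤ 5 ‖φ‖`. Summation by parts expands the multiplier `(n - k)₊ / (n + 1)`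
into a constant and Fejér weights `(1 - n / M)₊` with coefficients of total size at most `5`, and
Fejér means do not increase the sup norm because the Fejér kernel is nonnegative. For a polynomial
of degree `m` the kernel may be sampled at the `N`-th roots of unity, `N = M + m`, which keeps the
argument finite.
-/

open Finset Complex

theorem IsPrimitiveRoot.sum_pow_mul_inv_pow {K : Type*} [Field K] {ω : K} {N a b : ℕ}
    (hω : IsPrimitiveRoot ω N) (ha : a < N) (hb : b < N) :
    ∑ l ∈ range N, (ω ^ l) ^ a * (ω ^ l)⁻¹ ^ b = if a = b then (N : K) else 0 := by
  have hω0 : ω ≠ 0 := hω.ne_zero (by omega)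
  have hterm : ∀ l, (ω ^ l) ^ a * (ω ^ l)⁻¹ ^ b = (ω ^ a / ω ^ b) ^ l := fun l => by
    rw [div_pow, ← pow_mul, ← pow_mul, inv_pow, ← pow_mul, ← pow_mul, mul_comm l a, mul_comm l b,
      div_eq_mul_inv]
  simp_rw [hterm]
  split_ifs with hab
  · simp [hab, pow_ne_zero b hω0]
  · have hne : ω ^ a / ω ^ b ≠ 1 := fun h =>
      hab (hω.pow_inj ha hb ((div_eq_one_iff_eq (pow_ne_zero b hω0)).mp h))
    have hN : (ω ^ a / ω ^ b) ^ N = 1 := by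
      rw [div_pow, ← pow_mul, ← pow_mul, mul_comm a, mul_comm b, pow_mul, pow_mul, hω.pow_eq_one,
        one_pow, one_pow, div_one]
    rw [geom_sum_eq hne, hN, sub_self, zero_div]

namespace DividedDifference

noncomputable section

/-- `M - n` is truncated, so this is the Fejér weight `(1 - n / M)₊` (and `0` when `M = 0`). -/
def fejerWeight (M n : ℕ) : ℝ := ((M - n : ℕ) : ℝ) / M

theorem natCast_mul_fejerWeight (M n : ℕ) : (M : ℝ) * fejerWeight M n = ((M - n : ℕ) : ℝ) := by
  rcases Nat.eq_zero_or_pos M with rfl | hM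
  · simp
  · exact mul_div_cancel₀ _ (by positivity)

/-- On the `N`-th roots of unity `x`, `|∑_{i<M} x^i|²` is a nonnegative discrete Fejér kernel;
`M + n ≤ N` rules out aliasing of the frequencies. -/
theorem sum_norm_geom_sum_sq_mul_inv_pow {ω : ℂ} {N M n : ℕ} (hω : IsPrimitiveRoot ω N)
    (hMn : M + n ≤ N) :
    ∑ l ∈ range N, ((‖∑ i ∈ range M, (ω ^ l) ^ i‖ ^ 2 : ℝ) : ℂ) * (ω ^ l)⁻¹ ^ n
      = N * ((M - n : ℕ) : ℂ) := by
  have hexpand : ∀ l ∈ range N, ((‖∑ i ∈ range M, (ω ^ l) ^ i‖ ^ 2 : ℝ) : ℂ) * (ω ^ l)⁻¹ ^ n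
      = ∑ i ∈ range M, ∑ j ∈ range M, (ω ^ l) ^ i * (ω ^ l)⁻¹ ^ (j + n) := by
    intro l hl
    have hnorm : ‖ω ^ l‖ = 1 := by
      rw [norm_pow, hω.norm'_eq_one (by grind), one_pow]
    rw [ofReal_pow, ← mul_conj', map_sum, sum_mul_sum, sum_mul]
    refine sum_congr rfl fun i _ => ?_
    rw [sum_mul]
    refine sum_congr rfl fun j _ => ?_
    rw [map_pow, ← inv_eq_conj hnorm, pow_add]
    ring
  have hcount : ((range M).filter fun j => j + n ∈ range M) = range (M - n) := by
    ext j
    simp only [mem_filter, mem_range]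
    omega
  have horth : ∀ i ∈ range M, ∀ j ∈ range M,
      ∑ l ∈ range N, (ω ^ l) ^ i * (ω ^ l)⁻¹ ^ (j + n) = if i = j + n then (N : ℂ) else 0 :=
    fun i hi j hj => hω.sum_pow_mul_inv_pow (by simp at hi; omega) (by simp at hj; omega)
  rw [sum_congr rfl hexpand, sum_comm, sum_congr rfl fun i hi => (sum_comm.trans
    (sum_congr rfl fun j hj => horth i hi j hj)), sum_comm]
  simp_rw [sum_ite_eq', ← sum_filter, hcount]
  simp [mul_comm]

theorem norm_sum_fejerWeight_mul_le {m M : ℕ} (c : ℕ → ℂ) {Q : ℝ}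
    (hQ : ∀ w : ℂ, ‖w‖ = 1 → ‖∑ n ∈ range (m + 1), c n * w ^ n‖ ≤ Q) {z : ℂ} (hz : ‖z‖ = 1) :
    ‖∑ n ∈ range (m + 1), (fejerWeight M n : ℂ) * c n * z ^ n‖ ≤ Q := by
  rcases Nat.eq_zero_or_pos M with rfl | hM
  · simpa [fejerWeight] using (norm_nonneg _).trans (hQ 1 norm_one)
  set N := M + m
  have hω := Complex.isPrimitiveRoot_exp N (by omega)
  set ω := cexp (2 * Real.pi * I / N)
  set K : ℕ → ℝ := fun l => ‖∑ i ∈ range M, (ω ^ l) ^ i‖ ^ 2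
  have hK : ∑ l ∈ range N, K l = M * N := by
    have h0 := sum_norm_geom_sum_sq_mul_inv_pow (M := M) (n := 0) hω (by omega)
    simp only [pow_zero, mul_one, Nat.sub_zero] at h0
    exact_mod_cast h0.trans (mul_comm _ _)
  have hkernel : ∑ l ∈ range N, (K l : ℂ) * ∑ n ∈ range (m + 1), c n * (z * (ω ^ l)⁻¹) ^ n
      = (M * N : ℝ) * ∑ n ∈ range (m + 1), (fejerWeight M n : ℂ) * c n * z ^ n := by
    simp_rw [mul_sum]
    rw [sum_comm]
    refine sum_congr rfl fun n hn => ?_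
    have hcoeff := sum_norm_geom_sum_sq_mul_inv_pow hω (show M + n ≤ N by simp at hn; omega)
    have hweight : ((M : ℝ) : ℂ) * (fejerWeight M n : ℂ) = ((M - n : ℕ) : ℂ) := by
      exact_mod_cast natCast_mul_fejerWeight M n
    calc ∑ l ∈ range N, (K l : ℂ) * (c n * (z * (ω ^ l)⁻¹) ^ n)
        = c n * z ^ n * ∑ l ∈ range N, (K l : ℂ) * (ω ^ l)⁻¹ ^ n := by
          rw [mul_sum]; exact sum_congr rfl fun l _ => by ring
      _ = _ := by rw [hcoeff, ← hweight]; push_cast; ring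
  have hunit : ∀ l, ‖z * (ω ^ l)⁻¹‖ = 1 := fun l => by
    rw [norm_mul, norm_inv, norm_pow, hω.norm'_eq_one (by omega), one_pow, inv_one, hz, mul_one]
  have hMN : (0 : ℝ) < M * N := by positivity
  refine le_of_mul_le_mul_left ?_ hMN
  calc (M * N : ℝ) * ‖∑ n ∈ range (m + 1), (fejerWeight M n : ℂ) * c n * z ^ n‖
      = ‖∑ l ∈ range N, (K l : ℂ) * ∑ n ∈ range (m + 1), c n * (z * (ω ^ l)⁻¹) ^ n‖ := by
        rw [hkernel, norm_mul, norm_real, Real.norm_of_nonneg hMN.le]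
    _ ≤ ∑ l ∈ range N, K l * Q := norm_sum_le_of_le _ fun l _ => by
        rw [norm_mul, norm_real, Real.norm_of_nonneg (by positivity)]
        exact mul_le_mul_of_nonneg_left (hQ _ (hunit l)) (by positivity)
    _ = M * N * Q := by rw [← sum_mul, hK]

def secondDiff (s : ℕ → ℝ) (M : ℕ) : ℝ := s (M + 1) - 2 * s M + s (M - 1)

theorem sum_Icc_mul_secondDiff (s : ℕ → ℝ) {n m : ℕ} (h : n ≤ m) :
    ∑ M ∈ Icc 1 m, ((M - n : ℕ) : ℝ) * secondDiff s M
      = s n - s m + ((m - n : ℕ) : ℝ) * (s (m + 1) - s m) := by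
  induction m, h using Nat.le_induction with
  | base =>
    rw [sum_eq_zero fun M hM => by rw [Nat.sub_eq_zero_of_le (mem_Icc.1 hM).2]; simp]
    simp
  | succ m hnm ih =>
    rw [sum_Icc_succ_top (by omega), ih, secondDiff, Nat.add_sub_cancel,
      show m + 1 - n = m - n + 1 by omega]
    push_cast
    ring

/-- Summation by parts: on `[0, m]` every sequence is a constant plus a combination of Fejér
weights. -/
theorem eq_sum_fejerWeight (s : ℕ → ℝ) {n m : ℕ} (h : n ≤ m) :
    s n = s m - m * (s (m + 1) - s m) * fejerWeight m n
      + ∑ M ∈ Icc 1 m, M * secondDiff s M * fejerWeight M n := by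
  have hsum := sum_Icc_mul_secondDiff s h
  simp_rw [← natCast_mul_fejerWeight] at hsum
  rw [sum_congr rfl fun M _ => mul_right_comm ((M : ℕ) : ℝ) (secondDiff s M) _]
  linarith

theorem norm_sum_weight_mul_le {m : ℕ} (s : ℕ → ℝ) (c : ℕ → ℂ) {Q : ℝ}
    (hQ : ∀ w : ℂ, ‖w‖ = 1 → ‖∑ n ∈ range (m + 1), c n * w ^ n‖ ≤ Q) {z : ℂ} (hz : ‖z‖ = 1) :
    ‖∑ n ∈ range (m + 1), (s n : ℂ) * c n * z ^ n‖
      ≤ (|s m| + |m * (s (m + 1) - s m)| + ∑ M ∈ Icc 1 m, |M * secondDiff s M|) * Q := by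
  set F : ℕ → ℂ := fun M => ∑ n ∈ range (m + 1), (fejerWeight M n : ℂ) * c n * z ^ n
  have hdecomp : ∑ n ∈ range (m + 1), (s n : ℂ) * c n * z ^ n
      = (s m : ℂ) * ∑ n ∈ range (m + 1), c n * z ^ n - (m * (s (m + 1) - s m) : ℝ) * F m
        + ∑ M ∈ Icc 1 m, (M * secondDiff s M : ℝ) * F M := by
    simp only [F, mul_sum, ← sum_sub_distrib]
    rw [sum_comm, ← sum_add_distrib]
    refine sum_congr rfl fun n hn => ?_
    rw [eq_sum_fejerWeight s (Nat.le_of_lt_succ (mem_range.1 hn))]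
    push_cast
    rw [add_mul, add_mul, sum_mul, sum_mul]
    congr 1
    · ring
    · exact sum_congr rfl fun M _ => by ring
  have hF : ∀ M, ‖F M‖ ≤ Q := fun M => norm_sum_fejerWeight_mul_le c hQ hz
  rw [hdecomp, add_mul, add_mul]
  refine (norm_add_le _ _).trans (add_le_add ((norm_sub_le _ _).trans (add_le_add ?_ ?_)) ?_)
  · rw [norm_mul, norm_real, Real.norm_eq_abs]
    exact mul_le_mul_of_nonneg_left (hQ z hz) (abs_nonneg _)
  · rw [norm_mul, norm_real, Real.norm_eq_abs]
    exact mul_le_mul_of_nonneg_left (hF m) (abs_nonneg _)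
  · rw [sum_mul]
    refine norm_sum_le_of_le _ fun M _ => ?_
    rw [norm_mul, norm_real, Real.norm_eq_abs]
    exact mul_le_mul_of_nonneg_left (hF M) (abs_nonneg _)

/-- `n - k` is truncated, so the weight `(n - k)₊ / (n + 1)` vanishes for `n ≤ k`. -/
def splitWeight (k n : ℕ) : ℝ := ((n - k : ℕ) : ℝ) / (n + 1)

theorem splitWeight_of_le {k n : ℕ} (h : n ≤ k) : splitWeight k n = 0 := by
  simp [splitWeight, Nat.sub_eq_zero_of_le h]

theorem splitWeight_of_ge {k n : ℕ} (h : k ≤ n) : splitWeight k n = 1 - (k + 1) / (n + 1) := by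
  rw [splitWeight, Nat.cast_sub h]
  field_simp
  ring

theorem splitWeight_add_splitWeight_sub {k n : ℕ} (h : k < n) :
    splitWeight k n + splitWeight (n - 1 - k) n = 1 := by
  rw [splitWeight_of_ge h.le, splitWeight_of_ge (by omega), Nat.cast_sub (by omega),
    Nat.cast_sub (by omega)]
  field_simp
  ring

theorem abs_splitWeight_le_one (k n : ℕ) : |splitWeight k n| ≤ 1 := by
  rw [splitWeight, abs_of_nonneg (by positivity), div_le_one (by positivity)]
  exact_mod_cast (Nat.sub_le n k).trans n.le_succ

theorem abs_mul_splitWeight_succ_sub_le_one (k m : ℕ) :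
    |m * (splitWeight k (m + 1) - splitWeight k m)| ≤ 1 := by
  rcases le_or_gt k m with hkm | hmk
  · have hkm' : (k : ℝ) ≤ m := by exact_mod_cast hkm
    have hdiff : splitWeight k (m + 1) - splitWeight k m = (k + 1) / ((m + 1) * (m + 2)) := by
      rw [splitWeight_of_ge (by omega), splitWeight_of_ge hkm]
      push_cast
      field_simp
      ring
    rw [hdiff, abs_of_nonneg (by positivity), ← mul_div_assoc, div_le_one (by positivity)]
    nlinarith
  · simp [splitWeight_of_le hmk.le, splitWeight_of_le (show m + 1 ≤ k by omega)]

theorem secondDiff_splitWeight_of_lt {k M : ℕ} (h : M < k) : secondDiff (splitWeight k) M = 0 := by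
  rw [secondDiff, splitWeight_of_le (by omega), splitWeight_of_le h.le,
    splitWeight_of_le (by omega)]
  ring

theorem mul_secondDiff_splitWeight_self (M : ℕ) :
    M * secondDiff (splitWeight M) M = M / (M + 2) := by
  rw [secondDiff, splitWeight_of_ge (by omega), splitWeight_of_le le_rfl,
    splitWeight_of_le (by omega)]
  push_cast
  field_simp
  ring

theorem mul_secondDiff_splitWeight_of_gt {k M : ℕ} (h : k < M) :
    M * secondDiff (splitWeight k) M = -(2 * (k + 1) / ((M + 1) * (M + 2))) := by
  rw [secondDiff, splitWeight_of_ge (by omega), splitWeight_of_ge h.le,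
    splitWeight_of_ge (by omega), Nat.cast_sub (by omega : 1 ≤ M)]
  have hM : (1 : ℝ) ≤ M := by exact_mod_cast (by omega : 1 ≤ M)
  push_cast
  rw [sub_add_cancel]
  field_simp
  ring

/-- The second differences of `splitWeight k` are dominated by a point mass at `k` plus the
decrements of `M ↦ 2 (k + 1) / (max M k + 1)`, which telescope. -/
theorem abs_mul_secondDiff_splitWeight_le (k : ℕ) {M : ℕ} (hM : 1 ≤ M) :
    |M * secondDiff (splitWeight k) M|
      ≤ (if M = k then 1 else 0)
        + (2 * (k + 1) / ((max M k : ℕ) + 1) - 2 * (k + 1) / ((max (M + 1) k : ℕ) + 1)) := by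
  rcases lt_trichotomy M k with hlt | rfl | hgt
  · rw [secondDiff_splitWeight_of_lt hlt, max_eq_right hlt.le, max_eq_right (by omega),
      if_neg hlt.ne]
    simp
  · rw [mul_secondDiff_splitWeight_self, max_self, max_eq_left (by omega), if_pos rfl,
      abs_of_nonneg (by positivity)]
    push_cast
    rw [mul_div_cancel_right₀ _ (by positivity)]
    have h1 : (M : ℝ) / (M + 2) ≤ 1 := by rw [div_le_one (by positivity)]; linarith
    have h2 : 2 * ((M : ℝ) + 1) / (M + 1 + 1) ≤ 2 := by rw [div_le_iff₀ (by positivity)]; linarith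
    linarith
  · rw [mul_secondDiff_splitWeight_of_gt hgt, abs_neg, abs_of_nonneg (by positivity),
      max_eq_left hgt.le, max_eq_left (by omega), if_neg hgt.ne', zero_add]
    refine le_of_eq ?_
    push_cast
    field_simp
    ring

theorem sum_abs_mul_secondDiff_splitWeight_le (k m : ℕ) :
    ∑ M ∈ Icc 1 m, |M * secondDiff (splitWeight k) M| ≤ 3 := by
  set h : ℕ → ℝ := fun M => 2 * (k + 1) / ((max M k : ℕ) + 1)
  have htele : ∑ M ∈ Icc 1 m, (h M - h (M + 1)) = h 1 - h (m + 1) := by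
    have := sum_Ico_sub (f := h) (show 1 ≤ m + 1 by omega)
    rw [sum_sub_distrib] at this
    rw [← Ico_add_one_right_eq_Icc, sum_sub_distrib]
    linarith
  have hh1 : h 1 ≤ 2 := by
    rw [div_le_iff₀ (by positivity)]
    have : (k : ℝ) ≤ (max 1 k : ℕ) := by exact_mod_cast le_max_right 1 k
    linarith
  have hh : 0 ≤ h (m + 1) := by positivity
  calc ∑ M ∈ Icc 1 m, |M * secondDiff (splitWeight k) M|
      ≤ ∑ M ∈ Icc 1 m, ((if M = k then 1 else 0) + (h M - h (M + 1))) :=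
        sum_le_sum fun M hM => abs_mul_secondDiff_splitWeight_le k (mem_Icc.1 hM).1
    _ ≤ 1 + (h 1 - h (m + 1)) := by
        rw [sum_add_distrib, sum_ite_eq', htele]
        gcongr
        split_ifs <;> norm_num
    _ ≤ 3 := by linarith

def splitPart (c : ℕ → ℂ) (m k : ℕ) (z : ℂ) : ℂ :=
  ∑ n ∈ range (m + 1), (splitWeight k n : ℂ) * c n * z ^ n

theorem norm_splitPart_le {m : ℕ} (c : ℕ → ℂ) {Q : ℝ}
    (hQ : ∀ w : ℂ, ‖w‖ = 1 → ‖∑ n ∈ range (m + 1), c n * w ^ n‖ ≤ Q) (k : ℕ) {z : ℂ}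
    (hz : ‖z‖ = 1) : ‖splitPart c m k z‖ ≤ 5 * Q := by
  have hQ0 : 0 ≤ Q := (norm_nonneg _).trans (hQ 1 norm_one)
  refine (norm_sum_weight_mul_le _ c hQ hz).trans (mul_le_mul_of_nonneg_right ?_ hQ0)
  linarith [abs_splitWeight_le_one k m, abs_mul_splitWeight_succ_sub_le_one k m,
    sum_abs_mul_secondDiff_splitWeight_le k m]

theorem sum_range_eq_sum_mul_add_reflect {R : Type*} [CommSemiring R] (f w : ℕ → R) {n : ℕ}
    (hw : ∀ k < n, w k + w (n - 1 - k) = 1) :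
    ∑ k ∈ range n, f k = ∑ k ∈ range n, w k * (f k + f (n - 1 - k)) := by
  rw [sum_congr rfl fun k _ => mul_add (w k) _ _, sum_add_distrib,
    ← sum_range_reflect (fun k => w k * f (n - 1 - k)) n, ← sum_add_distrib]
  refine sum_congr rfl fun k hk => ?_
  have hk := mem_range.1 hk
  rw [show n - 1 - (n - 1 - k) = k by omega, ← add_mul, hw k hk, one_mul]

theorem pow_sub_pow_eq_mul_sum_splitWeight {ζ τ : ℂ} (hζ : ζ ≠ 0) (hτ : τ ≠ 0) {n m : ℕ}
    (hnm : n ≤ m) :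
    ζ ^ n - τ ^ n = (ζ - τ) * ∑ k ∈ range m, (splitWeight k n : ℂ)
      * (ζ⁻¹ ^ (k + 1) * ζ ^ n * τ ^ k + ζ ^ k * (τ⁻¹ ^ (k + 1) * τ ^ n)) := by
  have hinv : ∀ {x : ℂ}, x ≠ 0 → ∀ k < n, x⁻¹ ^ (k + 1) * x ^ n = x ^ (n - 1 - k) := by
    intro x hx k hk
    rw [inv_pow, mul_comm, ← pow_sub₀ x hx (by omega), Nat.sub_sub, add_comm 1]
  rw [← sum_subset (range_subset_range.2 hnm) fun k _ hk => by
      rw [splitWeight_of_le (by simpa using hk), ofReal_zero, zero_mul],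
    ← geom_sum₂_mul, mul_comm,
    sum_range_eq_sum_mul_add_reflect _ (fun k => (splitWeight k n : ℂ)) fun k hk => by
      rw [← ofReal_add, splitWeight_add_splitWeight_sub hk, ofReal_one]]
  congr 1
  refine sum_congr rfl fun k hk => ?_
  have hk := mem_range.1 hk
  rw [hinv hζ k hk, hinv hτ k hk, show n - 1 - (n - 1 - k) = k by omega]
  ring

theorem sub_eq_mul_sum_splitPart (c : ℕ → ℂ) (m : ℕ) {ζ τ : ℂ} (hζ : ζ ≠ 0) (hτ : τ ≠ 0) :
    ∑ n ∈ range (m + 1), c n * ζ ^ n - ∑ n ∈ range (m + 1), c n * τ ^ n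
      = (ζ - τ) * ∑ k ∈ range m, (ζ⁻¹ ^ (k + 1) * splitPart c m k ζ * τ ^ k
          + ζ ^ k * (τ⁻¹ ^ (k + 1) * splitPart c m k τ)) := by
  rw [← sum_sub_distrib]
  simp_rw [← mul_sub]
  rw [sum_congr rfl fun n hn => congrArg (c n * ·)
    (pow_sub_pow_eq_mul_sum_splitWeight hζ hτ (Nat.le_of_lt_succ (mem_range.1 hn)))]
  simp_rw [mul_left_comm (c _) (ζ - τ), ← mul_sum]
  congr 1
  simp only [splitPart, mul_sum, sum_mul]
  rw [sum_comm]
  refine sum_congr rfl fun k _ => ?_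
  rw [← sum_add_distrib]
  exact sum_congr rfl fun n _ => by ring

theorem continuous_splitPart (c : ℕ → ℂ) (m k : ℕ) : Continuous (splitPart c m k) := by
  unfold splitPart
  fun_prop

def leftFactor (c : ℕ → ℂ) (m : ℕ) : Fin m ⊕ Fin m → ℂ → ℂ
  | .inl k, ζ => ζ⁻¹ ^ ((k : ℕ) + 1) * splitPart c m k ζ
  | .inr k, ζ => ζ ^ (k : ℕ)

def rightFactor (c : ℕ → ℂ) (m : ℕ) : Fin m ⊕ Fin m → ℂ → ℂ
  | .inl k, τ => τ ^ (k : ℕ)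
  | .inr k, τ => τ⁻¹ ^ ((k : ℕ) + 1) * splitPart c m k τ

theorem continuousOn_inv_pow_mul_splitPart (c : ℕ → ℂ) (m k j : ℕ) :
    ContinuousOn (fun z => z⁻¹ ^ j * splitPart c m k z) (Metric.sphere 0 1) :=
  ((continuousOn_inv₀.mono fun z hz => ne_zero_of_mem_sphere one_ne_zero ⟨z, hz⟩).pow j).mul
    (continuous_splitPart c m k).continuousOn

theorem continuousOn_leftFactor (c : ℕ → ℂ) (m : ℕ) (x : Fin m ⊕ Fin m) :
    ContinuousOn (leftFactor c m x) (Metric.sphere 0 1) := by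
  rcases x with k | k
  · exact continuousOn_inv_pow_mul_splitPart c m k _
  · exact (continuous_pow _).continuousOn

theorem continuousOn_rightFactor (c : ℕ → ℂ) (m : ℕ) (x : Fin m ⊕ Fin m) :
    ContinuousOn (rightFactor c m x) (Metric.sphere 0 1) := by
  rcases x with k | k
  · exact (continuous_pow _).continuousOn
  · exact continuousOn_inv_pow_mul_splitPart c m k _

theorem sum_leftFactor_mul_rightFactor (c : ℕ → ℂ) (m : ℕ) (ζ τ : ℂ) :
    ∑ x, leftFactor c m x ζ * rightFactor c m x τ
      = ∑ k ∈ range m, (ζ⁻¹ ^ (k + 1) * splitPart c m k ζ * τ ^ k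
          + ζ ^ k * (τ⁻¹ ^ (k + 1) * splitPart c m k τ)) := by
  rw [Fintype.sum_sum_type, sum_add_distrib]
  exact congrArg₂ (· + ·)
    (Fin.sum_univ_eq_sum_range (fun k => ζ⁻¹ ^ (k + 1) * splitPart c m k ζ * τ ^ k) m)
    (Fin.sum_univ_eq_sum_range (fun k => ζ ^ k * (τ⁻¹ ^ (k + 1) * splitPart c m k τ)) m)

theorem iSup_sphere_norm_pow (j : ℕ) : ⨆ ζ : Metric.sphere (0 : ℂ) 1, ‖(ζ : ℂ) ^ j‖ = 1 := by
  simp only [norm_pow, norm_eq_of_mem_sphere, one_pow, ciSup_const]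

theorem iSup_sphere_norm_inv_pow_mul_le {g : ℂ → ℂ} {B : ℝ} (hg : ∀ z : ℂ, ‖z‖ = 1 → ‖g z‖ ≤ B)
    (j : ℕ) : ⨆ ζ : Metric.sphere (0 : ℂ) 1, ‖(ζ : ℂ)⁻¹ ^ j * g ζ‖ ≤ B :=
  ciSup_le fun ζ => by
    rw [norm_mul, norm_pow, norm_inv, norm_eq_of_mem_sphere, inv_one, one_pow, one_mul]
    exact hg _ (norm_eq_of_mem_sphere ζ)

theorem iSup_norm_leftFactor_mul_iSup_norm_rightFactor_le {m : ℕ} (c : ℕ → ℂ) {Q : ℝ}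
    (hQ : ∀ w : ℂ, ‖w‖ = 1 → ‖∑ n ∈ range (m + 1), c n * w ^ n‖ ≤ Q) (x : Fin m ⊕ Fin m) :
    (⨆ ζ : Metric.sphere (0 : ℂ) 1, ‖leftFactor c m x ζ‖)
      * (⨆ τ : Metric.sphere (0 : ℂ) 1, ‖rightFactor c m x τ‖) ≤ 5 * Q := by
  have hsplit : ∀ k : ℕ, ∀ z : ℂ, ‖z‖ = 1 → ‖splitPart c m k z‖ ≤ 5 * Q :=
    fun k _ hz => norm_splitPart_le c hQ k hz
  rcases x with k | k
  · simp only [leftFactor, rightFactor, iSup_sphere_norm_pow, mul_one]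
    exact iSup_sphere_norm_inv_pow_mul_le (hsplit k) _
  · simp only [leftFactor, rightFactor, iSup_sphere_norm_pow, one_mul]
    exact iSup_sphere_norm_inv_pow_mul_le (hsplit k) _

theorem norm_eval_le_iSup_sphere (φ : Polynomial ℂ) {w : ℂ} (hw : ‖w‖ = 1) :
    ‖φ.eval w‖ ≤ ⨆ ζ : Metric.sphere (0 : ℂ) 1, ‖φ.eval (ζ : ℂ)‖ :=
  le_ciSup (f := fun ζ : Metric.sphere (0 : ℂ) 1 => ‖φ.eval (ζ : ℂ)‖)
    (isCompact_range (by fun_prop)).bddAbove ⟨w, mem_sphere_zero_iff_norm.2 hw⟩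

end

end DividedDifference

open DividedDifference in
/-- The divided difference of an analytic polynomial `φ` of degree at most `m ≥ 1` has
projective tensor norm in `C(𝕋) ⊗̂ C(𝕋)` at most `c·m·‖φ‖_{C(𝕋)}`: there exist continuous
functions `u₁,…,u_{2m}` and `v₁,…,v_{2m}` on the unit circle with
`(φ(ζ) − φ(τ))/(ζ − τ) = Σ_n u_n(ζ)·v_n(τ)` for `ζ ≠ τ` on `𝕋` and
`Σ_n (sup|u_n|)·(sup|v_n|) ≤ c·m·sup|φ|`. -/
theorem divided_difference_projective_tensor_bound :
    ∃ c : ℝ, 0 < c ∧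
      ∀ (m : ℕ), 1 ≤ m →
      ∀ (φ : Polynomial ℂ), φ.natDegree ≤ m →
      ∃ u v : Fin (2 * m) → ℂ → ℂ,
        (∀ n, ContinuousOn (u n) (Metric.sphere (0 : ℂ) 1)) ∧
        (∀ n, ContinuousOn (v n) (Metric.sphere (0 : ℂ) 1)) ∧
        (∀ ζ ∈ Metric.sphere (0 : ℂ) 1, ∀ τ ∈ Metric.sphere (0 : ℂ) 1, ζ ≠ τ →
          (φ.eval ζ - φ.eval τ) / (ζ - τ) = ∑ n : Fin (2 * m), u n ζ * v n τ) ∧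
        ∑ n : Fin (2 * m),
            (⨆ ζ : Metric.sphere (0 : ℂ) 1, ‖u n (ζ : ℂ)‖) *
              (⨆ ζ : Metric.sphere (0 : ℂ) 1, ‖v n (ζ : ℂ)‖)
          ≤ c * m * ⨆ ζ : Metric.sphere (0 : ℂ) 1, ‖φ.eval (ζ : ℂ)‖ := by
  refine ⟨10, by norm_num, fun m _ φ hφ => ?_⟩
  have heval : ∀ z, φ.eval z = ∑ n ∈ range (m + 1), φ.coeff n * z ^ n :=
    Polynomial.eval_eq_sum_range' (Nat.lt_succ_of_le hφ)
  have hQ : ∀ w : ℂ, ‖w‖ = 1 → ‖∑ n ∈ range (m + 1), φ.coeff n * w ^ n‖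
      ≤ ⨆ ζ : Metric.sphere (0 : ℂ) 1, ‖φ.eval (ζ : ℂ)‖ :=
    fun w hw => heval w ▸ norm_eval_le_iSup_sphere φ hw
  let e : Fin m ⊕ Fin m ≃ Fin (2 * m) := finSumFinEquiv.trans (finCongr (two_mul m).symm)
  refine ⟨fun n => leftFactor φ.coeff m (e.symm n), fun n => rightFactor φ.coeff m (e.symm n),
    fun n => continuousOn_leftFactor _ _ _, fun n => continuousOn_rightFactor _ _ _, ?_, ?_⟩
  · intro ζ hζ τ hτ hζτ
    rw [e.symm.sum_comp (fun x => leftFactor φ.coeff m x ζ * rightFactor φ.coeff m x τ),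
      sum_leftFactor_mul_rightFactor, heval, heval,
      sub_eq_mul_sum_splitPart _ _ (ne_zero_of_mem_sphere one_ne_zero ⟨ζ, hζ⟩)
        (ne_zero_of_mem_sphere one_ne_zero ⟨τ, hτ⟩),
      mul_div_cancel_left₀ _ (sub_ne_zero.2 hζτ)]
  · rw [e.symm.sum_comp (fun x => (⨆ ζ : Metric.sphere (0 : ℂ) 1, ‖leftFactor φ.coeff m x ζ‖)
      * (⨆ τ : Metric.sphere (0 : ℂ) 1, ‖rightFactor φ.coeff m x τ‖))]
    refine (sum_le_sum fun x _ =>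
      iSup_norm_leftFactor_mul_iSup_norm_rightFactor_le φ.coeff hQ x).trans_eq ?_
    simp only [sum_const, card_univ, Fintype.card_sum, Fintype.card_fin, nsmul_eq_mul]
    push_cast
    ring
end

section
/- There is an absolute constant c > 0 such that for every integer k ≥ 0 and every analytic polynomial φ(z) = Σ_{n≥0} φ̂(n) z^n, one has sup_{|z|=1} |Σ_{j≥0} α_{jk}·φ̂(j + k + 1)·z^j| ≤ c·sup_{|z|=1} |φ(z)|, where α_{jk} = j/(j + k) when j + k ≠ 0 and α_{00} = 1/2. -/
/-!
Multiplying the sum by `z ^ (k + 1)` turns it into `∑ n, m_k n * φ̂ n * z ^ n`, where `m_k n = 0`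
for `n ≤ k` and `m_k n = 1 - k / (n - 1)` for `n > k ≥ 1` (and `m_0 = 0, 1/2, 1, 1, …`).
Summing by parts twice expands any multiplier sequence `m` in the triangular sequences
`(r - n)₊`, up to a linear boundary term. The multiplier `(r - n)₊` is the Fejér mean: it is the
convolution of `φ` with the nonnegative kernel `|D_r|²` of mass `r`, hence bounded by
`r * sup |φ|`. So `m` has norm at most `∑ r, (r + 1) * |Δ²m r|` plus the boundary term. For `m_k`
the second difference is `1 / (k + 1)` at the kink `r = k` and `-2k / ((r - 1) r (r + 1))` beyond,
so the sum telescopes to at most `3`, and the boundary term is `1`.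
-/

open Complex ComplexConjugate Finset Polynomial
open scoped Real

noncomputable section

theorem integral_exp_int_mul_I (t : ℤ) :
    ∫ θ in (0 : ℝ)..2 * π, exp (t * θ * I) = if t = 0 then 2 * π else 0 := by
  split_ifs with ht
  · simp [ht]
  · have hc : (t : ℂ) * I ≠ 0 := by simp [ht, I_ne_zero]
    simp_rw [mul_right_comm _ _ I]
    have hperiod : exp (t * I * (2 * (π : ℂ))) = 1 := by
      rw [← exp_int_mul_two_pi_mul_I t]; ring_nf
    simp [integral_exp_mul_complex hc, hperiod]

theorem integral_sum_exp_int_mul_I {ι : Type*} (s : Finset ι) (a : ι → ℂ) (t : ι → ℤ) :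
    ∫ θ in (0 : ℝ)..2 * π, ∑ i ∈ s, a i * exp (t i * θ * I) =
      2 * π * ∑ i ∈ s with t i = 0, a i := by
  rw [intervalIntegral.integral_finsetSum fun i _ =>
    (by fun_prop : Continuous _).intervalIntegrable _ _]
  simp_rw [intervalIntegral.integral_const_mul, integral_exp_int_mul_I, sum_filter, mul_sum]
  refine sum_congr rfl fun i _ => ?_
  split_ifs <;> push_cast <;> ring

def dirichletKernel (r : ℕ) (θ : ℝ) : ℂ := ∑ a ∈ range r, exp (a * θ * I)

theorem conj_dirichletKernel (r : ℕ) (θ : ℝ) :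
    conj (dirichletKernel r θ) = ∑ b ∈ range r, exp (-(b * θ * I)) := by
  simp [dirichletKernel, map_sum, ← exp_conj]

theorem sum_filter_sub_sub_eq_zero (r N : ℕ) (f : ℕ → ℂ) :
    ∑ p ∈ range r ×ˢ range N ×ˢ range r with (p.1 : ℤ) - p.2.2 - p.2.1 = 0, f p.2.1 =
      ∑ n ∈ range N, ((r - n : ℕ) : ℂ) * f n := by
  have hcond : ∀ a b n : ℕ, ((a : ℤ) - b - n = 0) ↔ a = b + n := fun a b n => by omega
  simp only [sum_filter, sum_product]
  rw [sum_comm]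
  refine sum_congr rfl fun n _ => ?_
  simp only [hcond]
  rw [sum_comm]
  simp only [sum_ite_eq', mem_range]
  rw [← sum_filter, sum_const, nsmul_eq_mul,
    show {b ∈ range r | b + n < r} = range (r - n) by ext; simp; omega, card_range]

theorem fejerSum_eq_integral (φ : ℂ[X]) {N : ℕ} (hN : φ.natDegree < N) (r : ℕ) (z : ℂ) :
    2 * π * ∑ n ∈ range N, ((r - n : ℕ) : ℂ) * φ.coeff n * z ^ n =
      ∫ θ in (0 : ℝ)..2 * π, (‖dirichletKernel r θ‖ ^ 2 : ℝ) * φ.eval (z * exp (-(θ * I))) := by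
  have hexpand : ∀ θ : ℝ, (‖dirichletKernel r θ‖ ^ 2 : ℝ) * φ.eval (z * exp (-(θ * I))) =
      ∑ p ∈ range r ×ˢ range N ×ˢ range r,
        φ.coeff p.2.1 * z ^ p.2.1 * exp (((p.1 : ℤ) - p.2.2 - p.2.1 : ℤ) * θ * I) := by
    intro θ
    rw [ofReal_pow, ← mul_conj', conj_dirichletKernel, dirichletKernel, eval_eq_sum_range' hN]
    rw [sum_mul_sum, sum_mul]
    simp only [sum_product, sum_mul, mul_sum]
    refine sum_congr rfl fun a _ => sum_congr rfl fun n _ => sum_congr rfl fun b _ => ?_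
    rw [mul_pow, ← exp_nat_mul, Int.cast_sub, Int.cast_sub,
      show ((a : ℤ) - (b : ℤ) - (n : ℤ) : ℂ) * θ * I = a * θ * I + -(b * θ * I) + n * -(θ * I) by
        push_cast; ring, exp_add, exp_add]
    ring
  simp_rw [hexpand, integral_sum_exp_int_mul_I]
  rw [sum_filter_sub_sub_eq_zero (f := fun n => φ.coeff n * z ^ n)]
  simp_rw [mul_assoc]

theorem integral_norm_dirichletKernel_sq (r : ℕ) :
    ∫ θ in (0 : ℝ)..2 * π, ‖dirichletKernel r θ‖ ^ 2 = 2 * π * r := by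
  have h := fejerSum_eq_integral 1 (N := 1) (by simp) r 1
  simp only [range_one, sum_singleton, coeff_one_zero, eval_one, mul_one, one_pow, Nat.sub_zero,
    intervalIntegral.integral_ofReal] at h
  exact_mod_cast h.symm

theorem norm_fejerSum_le (φ : ℂ[X]) {N : ℕ} (hN : φ.natDegree < N) (r : ℕ) {z : ℂ}
    (hz : ‖z‖ = 1) {S : ℝ} (hS : ∀ w : ℂ, ‖w‖ = 1 → ‖φ.eval w‖ ≤ S) :
    ‖∑ n ∈ range N, ((r - n : ℕ) : ℂ) * φ.coeff n * z ^ n‖ ≤ r * S := by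
  have hπ : 0 < 2 * π := by positivity
  have hbound : ∀ θ : ℝ, ‖(‖dirichletKernel r θ‖ ^ 2 : ℝ) * φ.eval (z * exp (-(θ * I)))‖ ≤
      ‖dirichletKernel r θ‖ ^ 2 * S := fun θ => by
    rw [norm_mul, norm_real, Real.norm_of_nonneg (by positivity)]
    exact mul_le_mul_of_nonneg_left (hS _ (by simp [hz, norm_exp])) (by positivity)
  have h := calc
    ‖2 * π * ∑ n ∈ range N, ((r - n : ℕ) : ℂ) * φ.coeff n * z ^ n‖
      ≤ ∫ θ in (0 : ℝ)..2 * π, ‖dirichletKernel r θ‖ ^ 2 * S := by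
        rw [fejerSum_eq_integral φ hN r z]
        refine intervalIntegral.norm_integral_le_of_norm_le hπ.le
          (Filter.Eventually.of_forall fun θ _ => hbound θ) ?_
        exact (by unfold dirichletKernel; fun_prop : Continuous _).intervalIntegrable _ _
    _ = 2 * π * (r * S) := by
        rw [intervalIntegral.integral_mul_const, integral_norm_dirichletKernel_sq, mul_assoc]
  rw [norm_mul, show ‖(2 * π : ℂ)‖ = 2 * π by simp [Real.pi_nonneg]] at h
  exact le_of_mul_le_mul_left h hπ

def secondDiff {R : Type*} [Ring R] (b : ℕ → R) (r : ℕ) : R := b r - 2 * b (r + 1) + b (r + 2)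

theorem eq_sum_secondDiff {R : Type*} [CommRing R] (b : ℕ → R) {n M : ℕ} (hnM : n ≤ M) :
    b n = ∑ r ∈ range M, ((r + 1 - n : ℕ) : R) * secondDiff b r + b M +
      ((M - n : ℕ) : R) * (b M - b (M + 1)) := by
  induction M, hnM using Nat.le_induction with
  | base =>
    rw [sum_eq_zero fun r hr => by rw [Nat.sub_eq_zero_of_le (mem_range.mp hr), Nat.cast_zero,
      zero_mul]]
    simp
  | succ M hnM ih =>
    rw [ih, sum_range_succ, Nat.succ_sub hnM, secondDiff]
    push_cast
    ring

def fejerBound (m : ℕ → ℝ) (M : ℕ) : ℝ :=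
  ∑ r ∈ range M, (r + 1) * |secondDiff m r| + |m M| + M * |m M - m (M + 1)|

theorem norm_sum_multiplier_le (φ : ℂ[X]) {N : ℕ} (hN : φ.natDegree < N) {z : ℂ}
    (hz : ‖z‖ = 1) {S : ℝ} (hS : ∀ w : ℂ, ‖w‖ = 1 → ‖φ.eval w‖ ≤ S) (m : ℕ → ℝ) {M : ℕ}
    (hNM : N ≤ M + 1) :
    ‖∑ n ∈ range N, (m n : ℂ) * φ.coeff n * z ^ n‖ ≤ fejerBound m M * S := by
  set F : ℕ → ℂ := fun r => ∑ n ∈ range N, ((r - n : ℕ) : ℂ) * φ.coeff n * z ^ n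
  have hF : ∀ r : ℕ, ‖F r‖ ≤ r * S := fun r => norm_fejerSum_le φ hN r hz hS
  have hdecomp : ∑ n ∈ range N, (m n : ℂ) * φ.coeff n * z ^ n =
      ∑ r ∈ range M, ((secondDiff m r : ℝ) : ℂ) * F (r + 1) + (m M : ℂ) * φ.eval z +
        ((m M - m (M + 1) : ℝ) : ℂ) * F M := by
    have hm : ∀ n ∈ range N, (m n : ℂ) =
        ∑ r ∈ range M, ((r + 1 - n : ℕ) : ℂ) * (secondDiff m r : ℝ) + m M +
          ((M - n : ℕ) : ℂ) * (m M - m (M + 1) : ℝ) := fun n hn => by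
      exact_mod_cast eq_sum_secondDiff m (by have := mem_range.mp hn; omega : n ≤ M)
    rw [sum_congr rfl fun n hn => by rw [hm n hn], eval_eq_sum_range' hN]
    simp only [F, add_mul, sum_add_distrib, sum_mul, mul_sum]
    rw [sum_comm]
    congr 1
    · congr 1
      · exact sum_congr rfl fun r _ => sum_congr rfl fun n _ => by ring
      · exact sum_congr rfl fun n _ => by ring
    · exact sum_congr rfl fun n _ => by ring
  rw [hdecomp, fejerBound, add_mul, add_mul, sum_mul]
  refine norm_add₃_le.trans
    (add_le_add_three ((norm_sum_le _ _).trans (sum_le_sum fun r _ => ?_)) ?_ ?_)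
  all_goals simp only [norm_mul, norm_real, Real.norm_eq_abs]
  · rw [mul_comm _ |_|, mul_assoc]
    exact mul_le_mul_of_nonneg_left (by exact_mod_cast hF (r + 1)) (abs_nonneg _)
  · exact mul_le_mul_of_nonneg_left (hS z hz) (abs_nonneg _)
  · rw [mul_comm _ |_|, mul_assoc]
    exact mul_le_mul_of_nonneg_left (hF M) (abs_nonneg _)

def alphaCoeff (j k : ℕ) : ℝ := if j + k = 0 then 1 / 2 else (j : ℝ) / ((j : ℝ) + (k : ℝ))

-- The elaborator pushes the coercion of `alphaCoeff` into both branches in the main statement.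
theorem ofReal_alphaCoeff (j k : ℕ) : (alphaCoeff j k : ℂ) =
    if j + k = 0 then ((1 / 2 : ℝ) : ℂ) else ((j : ℝ) : ℂ) / (((j : ℝ) : ℂ) + ((k : ℝ) : ℂ)) := by
  unfold alphaCoeff
  split_ifs <;> push_cast <;> rfl

def shiftedAlpha (k n : ℕ) : ℝ := if n ≤ k then 0 else alphaCoeff (n - (k + 1)) k

theorem pow_mul_sum_alphaCoeff (c : ℕ → ℂ) (z : ℂ) (k D : ℕ) :
    z ^ (k + 1) * ∑ j ∈ range D, (alphaCoeff j k : ℂ) * c (j + k + 1) * z ^ j =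
      ∑ n ∈ range (k + 1 + D), (shiftedAlpha k n : ℂ) * c n * z ^ n := by
  rw [sum_range_add, mul_sum, sum_eq_zero (s := range (k + 1)) fun n hn => by
    simp [shiftedAlpha, Nat.le_of_lt_succ (mem_range.mp hn)], zero_add]
  refine sum_congr rfl fun j _ => ?_
  have hj : shiftedAlpha k (k + 1 + j) = alphaCoeff j k := by
    simp [shiftedAlpha, show ¬k + 1 + j ≤ k by omega]
  rw [hj, show k + 1 + j = j + k + 1 by omega]
  ring

section PositiveShift

variable {k : ℕ}

theorem shiftedAlpha_of_le (hk : k ≠ 0) {n : ℕ} (hn : n ≤ k + 1) : shiftedAlpha k n = 0 := by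
  rcases hn.lt_or_eq with hn | rfl
  · simp [shiftedAlpha, Nat.le_of_lt_succ hn]
  · simp [shiftedAlpha, alphaCoeff, hk]

theorem shiftedAlpha_of_ge (hk : k ≠ 0) {n : ℕ} (hn : k + 1 ≤ n) :
    shiftedAlpha k n = 1 - k / ((n : ℝ) - 1) := by
  have hk' : (0 : ℝ) < k := by positivity
  have hn' : (k : ℝ) + 1 ≤ n := by exact_mod_cast hn
  simp only [shiftedAlpha, alphaCoeff, show ¬n ≤ k by omega, if_false,
    show n - (k + 1) + k ≠ 0 by omega]
  have hn1 : (n : ℝ) - 1 ≠ 0 := by linarith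
  rw [Nat.cast_sub hn]
  push_cast
  rw [show (n : ℝ) - (k + 1) + k = n - 1 by ring]
  field_simp
  ring

theorem secondDiff_shiftedAlpha_of_lt (hk : k ≠ 0) {r : ℕ} (hr : r < k) :
    secondDiff (shiftedAlpha k) r = 0 := by
  simp [secondDiff, shiftedAlpha_of_le hk (by omega : r ≤ k + 1),
    shiftedAlpha_of_le hk (by omega : r + 1 ≤ k + 1),
    shiftedAlpha_of_le hk (by omega : r + 2 ≤ k + 1)]

theorem secondDiff_shiftedAlpha_self (hk : k ≠ 0) :
    secondDiff (shiftedAlpha k) k = 1 / (k + 1) := by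
  have hk1 : (k : ℝ) + 1 ≠ 0 := by positivity
  rw [secondDiff, shiftedAlpha_of_le hk le_self_add, shiftedAlpha_of_le hk le_rfl,
    shiftedAlpha_of_ge hk (by omega), show ((k + 2 : ℕ) : ℝ) - 1 = k + 1 by push_cast; ring]
  field_simp
  ring

theorem succ_mul_abs_secondDiff_shiftedAlpha (hk : k ≠ 0) {L : ℕ} (hL : k ≤ L) :
    (((L + 1 : ℕ) : ℝ) + 1) * |secondDiff (shiftedAlpha k) (L + 1)| =
      2 * k / L - 2 * k / (L + 1) := by
  have hL0 : (0 : ℝ) < L := by have := Nat.pos_of_ne_zero hk; exact_mod_cast this.trans_le hL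
  have hsd : secondDiff (shiftedAlpha k) (L + 1) = -(2 * k / (L * (L + 1) * (L + 2))) := by
    rw [secondDiff, shiftedAlpha_of_ge hk (by omega), shiftedAlpha_of_ge hk (by omega),
      shiftedAlpha_of_ge hk (by omega), show ((L + 1 : ℕ) : ℝ) - 1 = L by push_cast; ring,
      show ((L + 1 + 1 : ℕ) : ℝ) - 1 = L + 1 by push_cast; ring,
      show ((L + 1 + 2 : ℕ) : ℝ) - 1 = L + 2 by push_cast; ring]
    field_simp
    ring
  rw [hsd, abs_neg, abs_of_nonneg (by positivity)]
  push_cast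
  field_simp
  ring

theorem sum_succ_mul_abs_secondDiff_shiftedAlpha (hk : k ≠ 0) {L : ℕ} (hL : k ≤ L) :
    ∑ r ∈ range (L + 1), (r + 1) * |secondDiff (shiftedAlpha k) r| = 3 - 2 * k / L := by
  induction L, hL using Nat.le_induction with
  | base =>
    have hk0 : (k : ℝ) ≠ 0 := by exact_mod_cast hk
    rw [sum_range_succ, sum_eq_zero fun r hr => by
      rw [secondDiff_shiftedAlpha_of_lt hk (mem_range.mp hr), abs_zero, mul_zero],
      secondDiff_shiftedAlpha_self hk, abs_of_nonneg (by positivity)]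
    field_simp
    ring
  | succ L hL ih =>
    rw [sum_range_succ, ih, succ_mul_abs_secondDiff_shiftedAlpha hk hL]
    push_cast
    ring

theorem abs_shiftedAlpha_add_mul_abs_sub (hk : k ≠ 0) {L : ℕ} (hL : k ≤ L) :
    |shiftedAlpha k (L + 1)| +
      ((L + 1 : ℕ) : ℝ) * |shiftedAlpha k (L + 1) - shiftedAlpha k (L + 1 + 1)| = 1 := by
  have hL0 : (0 : ℝ) < L := by have := Nat.pos_of_ne_zero hk; exact_mod_cast this.trans_le hL
  have hkL : (k : ℝ) ≤ L := by exact_mod_cast hL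
  rw [shiftedAlpha_of_ge hk (by omega), shiftedAlpha_of_ge hk (by omega)]
  push_cast
  rw [add_sub_cancel_right, add_sub_cancel_right, abs_of_nonneg, abs_of_nonpos]
  · field_simp
    ring
  · linarith [div_le_div_of_nonneg_left (Nat.cast_nonneg k) hL0 (by linarith : (L : ℝ) ≤ L + 1)]
  · linarith [(div_le_one hL0).mpr hkL]

theorem fejerBound_shiftedAlpha (hk : k ≠ 0) {L : ℕ} (hL : k ≤ L) :
    fejerBound (shiftedAlpha k) (L + 1) = 4 - 2 * k / L := by
  rw [fejerBound, sum_succ_mul_abs_secondDiff_shiftedAlpha hk hL, add_assoc,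
    abs_shiftedAlpha_add_mul_abs_sub hk hL]
  ring

end PositiveShift

theorem shiftedAlpha_zero_of_two_le {n : ℕ} (hn : 2 ≤ n) : shiftedAlpha 0 n = 1 := by
  have : ((n - 1 : ℕ) : ℝ) ≠ 0 := by exact_mod_cast (by omega : n - 1 ≠ 0)
  simp [shiftedAlpha, alphaCoeff, show ¬n ≤ 0 by omega, show n - 1 ≠ 0 by omega, this]

theorem fejerBound_shiftedAlpha_zero {M : ℕ} (hM : 2 ≤ M) :
    fejerBound (shiftedAlpha 0) M = 2 := by
  have hterm : ∀ r : ℕ,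
      ((r : ℝ) + 1) * |secondDiff (shiftedAlpha 0) r| = if r = 1 then 1 else 0 := by
    rintro (_ | _ | r)
    · simp [secondDiff, shiftedAlpha, alphaCoeff]
    · norm_num [secondDiff, shiftedAlpha, alphaCoeff]
    · norm_num [secondDiff, shiftedAlpha_zero_of_two_le]
  simp only [fejerBound, hterm, sum_ite_eq', mem_range, show 1 < M by omega, if_true,
    shiftedAlpha_zero_of_two_le hM, shiftedAlpha_zero_of_two_le (by omega : 2 ≤ M + 1)]
  norm_num

theorem fejerBound_shiftedAlpha_le {k M : ℕ} (hM : k + 2 ≤ M) :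
    fejerBound (shiftedAlpha k) M ≤ 4 := by
  rcases eq_or_ne k 0 with rfl | hk
  · rw [fejerBound_shiftedAlpha_zero hM]
    norm_num
  · obtain ⟨L, rfl⟩ : ∃ L, M = L + 1 := ⟨M - 1, by omega⟩
    rw [fejerBound_shiftedAlpha hk (by omega)]
    linarith [show (0 : ℝ) ≤ 2 * k / L by positivity]

theorem le_iSup_of_isCompact {X : Type*} [TopologicalSpace X] {K : Set X} (hK : IsCompact K)
    {f : X → ℝ} (hf : ContinuousOn f K) {x : X} (hx : x ∈ K) : f x ≤ ⨆ y : K, f y :=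
  le_ciSup (f := fun y : K => f y) (by rw [← Set.image_eq_range]; exact hK.bddAbove_image hf)
    ⟨x, hx⟩

end

/-- There is an absolute constant `c > 0` such that for every `k ≥ 0` and every analytic
polynomial `φ`,
`sup_{|z|=1} |Σ_{j≥0} α_{jk}·φ̂(j+k+1)·z^j| ≤ c·sup_{|z|=1} |φ(z)|`, where
`α_{jk} = j/(j+k)` for `j+k ≠ 0` and `α_{00} = 1/2`. (The sum is finite since
`φ̂(j+k+1) = 0` for `j > deg φ`.) -/
theorem alpha_multiplier_bound :
    ∃ c : ℝ, 0 < c ∧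
      ∀ (k : ℕ) (φ : Polynomial ℂ),
        (⨆ z : Metric.sphere (0 : ℂ) 1,
            ‖∑ j ∈ Finset.range (φ.natDegree + 1),
              ((if j + k = 0 then (1 / 2 : ℝ) else (j : ℝ) / ((j : ℝ) + (k : ℝ))) : ℂ) *
                φ.coeff (j + k + 1) * (z : ℂ) ^ j‖)
          ≤ c * ⨆ z : Metric.sphere (0 : ℂ) 1, ‖φ.eval (z : ℂ)‖ := by
  refine ⟨4, by norm_num, fun k φ => ?_⟩
  set S := ⨆ z : Metric.sphere (0 : ℂ) 1, ‖φ.eval (z : ℂ)‖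
  have hS : ∀ w : ℂ, ‖w‖ = 1 → ‖φ.eval w‖ ≤ S := fun w hw =>
    le_iSup_of_isCompact (isCompact_sphere 0 1) (f := fun w => ‖φ.eval w‖) (by fun_prop)
      (by simpa using hw)
  have hS0 : 0 ≤ S := (norm_nonneg _).trans (hS 1 norm_one)
  have : Nonempty (Metric.sphere (0 : ℂ) 1) := ⟨⟨1, by simp⟩⟩
  refine ciSup_le fun z => ?_
  have hz : ‖(z : ℂ)‖ = 1 := by simp
  set N := k + 1 + (φ.natDegree + 1)
  calc _ = ‖(z : ℂ) ^ (k + 1) * ∑ j ∈ range (φ.natDegree + 1),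
          (alphaCoeff j k : ℂ) * φ.coeff (j + k + 1) * (z : ℂ) ^ j‖ := by
        rw [norm_mul, norm_pow, hz, one_pow, one_mul]
        simp only [ofReal_alphaCoeff]
    _ = ‖∑ n ∈ range N, (shiftedAlpha k n : ℂ) * φ.coeff n * (z : ℂ) ^ n‖ := by
        rw [pow_mul_sum_alphaCoeff]
    _ ≤ fejerBound (shiftedAlpha k) N * S := norm_sum_multiplier_le φ (by omega) hz hS _ (by omega)
    _ ≤ 4 * S := mul_le_mul_of_nonneg_right (fejerBound_shiftedAlpha_le (by omega)) hS0
end
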